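/- arXiv:math/9804138 — 4 statements merged into one kernel-verified Lean document; each statement's English description precedes it below -/
import Mathlib

section
/- Let A, B be Hopf algebras with Hopf algebra epimorphisms π_GK : A → B, and let C be a coalgebra with a surjective coalgebra morphism π_KH : B → C; set π_GH = π_KH ∘ π_GK. For a right C-comodule (V, ρ), the map id_V ⊗ L_GK, where L_GK = (π_GK ⊗ id) ∘ Δ_A, restricts to an isomorphism of right A-comodules ind_H^G(ρ) ≅ ind_K^G(ind_H^K(ρ)), with inverse induced by v ⊗ g ⊗ f ↦ ε_B(g) v ⊗ f. -/
open TensorProduct LinearMap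

set_option maxHeartbeats 1000000
set_option synthInstance.maxHeartbeats 1000000

section IndStages

variable {k A B C V : Type*} [Field k] [Ring A] [HopfAlgebra k A]
    [Ring B] [HopfAlgebra k B]
    [AddCommGroup C] [Module k C] [Coalgebra k C]
    [AddCommGroup V] [Module k V]

/-- Ψ ∘ Φ = id -/
private lemma indst_claim2 (πGK : A →ₗ[k] B)
    (hGKε : (Coalgebra.counit : B →ₗ[k] k) ∘ₗ πGK = (Coalgebra.counit : A →ₗ[k] k)) :
    (LinearMap.rTensor A ((TensorProduct.rid k V).toLinearMap ∘ₗ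
        LinearMap.lTensor V (Coalgebra.counit : B →ₗ[k] k))) ∘ₗ
      ((TensorProduct.assoc k V B A).symm.toLinearMap ∘ₗ
        LinearMap.lTensor V (LinearMap.rTensor A πGK ∘ₗ Coalgebra.comul)) = LinearMap.id := by
  have hεB : ∀ a : A, (Coalgebra.counit : B →ₗ[k] k) (πGK a) = Coalgebra.counit a :=
    fun a => LinearMap.congr_fun hGKε a
  apply TensorProduct.ext'
  intro v f
  have key : ∀ t : A ⊗[k] A,
      LinearMap.rTensor A ((TensorProduct.rid k V).toLinearMap ∘ₗ
        LinearMap.lTensor V (Coalgebra.counit : B →ₗ[k] k))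
        ((TensorProduct.assoc k V B A).symm (v ⊗ₜ LinearMap.rTensor A πGK t))
      = v ⊗ₜ (TensorProduct.lid k A) (LinearMap.rTensor A (Coalgebra.counit : A →ₗ[k] k) t) := by
    intro t
    induction t using TensorProduct.induction_on with
    | zero => simp
    | tmul a a' => simp [hεB, smul_tmul, tmul_smul]
    | add x y hx hy => simp only [map_add, tmul_add, hx, hy]
  simp only [comp_apply, LinearEquiv.coe_coe, lTensor_tmul, id_coe, id_eq]
  rw [key, Coalgebra.rTensor_counit_comul, TensorProduct.lid_tmul, one_smul]

/-- ψ₂ ∘ Φ = (Φ ⊗ id) ∘ ψ₀ -/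
private lemma indst_claim4 (πGK : A →ₗ[k] B) :
    ((TensorProduct.assoc k (V ⊗[k] B) A A).symm.toLinearMap ∘ₗ
      LinearMap.lTensor (V ⊗[k] B) (Coalgebra.comul : A →ₗ[k] A ⊗[k] A)) ∘ₗ
    ((TensorProduct.assoc k V B A).symm.toLinearMap ∘ₗ
      LinearMap.lTensor V (LinearMap.rTensor A πGK ∘ₗ Coalgebra.comul))
    = LinearMap.rTensor A ((TensorProduct.assoc k V B A).symm.toLinearMap ∘ₗ
        LinearMap.lTensor V (LinearMap.rTensor A πGK ∘ₗ Coalgebra.comul)) ∘ₗ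
      ((TensorProduct.assoc k V A A).symm.toLinearMap ∘ₗ
        LinearMap.lTensor V (Coalgebra.comul : A →ₗ[k] A ⊗[k] A)) := by
  apply TensorProduct.ext'
  intro v f
  have step1 : ∀ t : A ⊗[k] A,
      (TensorProduct.assoc k (V ⊗[k] B) A A).symm
        (LinearMap.lTensor (V ⊗[k] B) (Coalgebra.comul : A →ₗ[k] A ⊗[k] A)
          ((TensorProduct.assoc k V B A).symm (v ⊗ₜ LinearMap.rTensor A πGK t)))
      = (TensorProduct.assoc k (V ⊗[k] B) A A).symm
          ((TensorProduct.assoc k V B (A ⊗[k] A)).symm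
            (v ⊗ₜ LinearMap.rTensor (A ⊗[k] A) πGK
              (LinearMap.lTensor A (Coalgebra.comul : A →ₗ[k] A ⊗[k] A) t))) := by
    intro t
    induction t using TensorProduct.induction_on with
    | zero => simp
    | tmul a a' => simp
    | add x y hx hy => simp only [map_add, tmul_add, hx, hy]
  have step2 : ∀ t : A ⊗[k] A,
      LinearMap.rTensor A ((TensorProduct.assoc k V B A).symm.toLinearMap ∘ₗ
          LinearMap.lTensor V (LinearMap.rTensor A πGK ∘ₗ Coalgebra.comul))
        ((TensorProduct.assoc k V A A).symm (v ⊗ₜ t))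
      = LinearMap.rTensor A ((TensorProduct.assoc k V B A).symm.toLinearMap ∘ₗ
          (TensorProduct.mk k V (B ⊗[k] A)) v ∘ₗ LinearMap.rTensor A πGK)
        (LinearMap.rTensor A (Coalgebra.comul : A →ₗ[k] A ⊗[k] A) t) := by
    intro t
    induction t using TensorProduct.induction_on with
    | zero => simp
    | tmul a a' => simp
    | add x y hx hy => simp only [map_add, tmul_add, hx, hy]
  simp only [comp_apply, LinearEquiv.coe_coe, lTensor_tmul]
  rw [step1, step2, ← Coalgebra.coassoc_apply]
  generalize (LinearMap.rTensor A (Coalgebra.comul : A →ₗ[k] A ⊗[k] A)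
    (Coalgebra.comul f)) = w
  induction w using TensorProduct.induction_on with
  | zero => simp only [map_zero, tmul_zero]
  | tmul s a'' =>
      induction s using TensorProduct.induction_on with
      | zero => simp only [zero_tmul, map_zero, tmul_zero]
      | tmul a a' => simp
      | add x y hx hy => simp only [add_tmul, map_add, tmul_add, hx, hy]
  | add x y hx hy => simp only [map_add, tmul_add, hx, hy]

/-- the image of Φ satisfies the second `ind2` condition -/
private lemma indst_claimB (πGK : A →ₗ[k] B)
    (hGKΔ : Coalgebra.comul ∘ₗ πGK = TensorProduct.map πGK πGK ∘ₗ Coalgebra.comul) :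
    (LinearMap.lTensor (V ⊗[k] B) (LinearMap.rTensor A πGK ∘ₗ Coalgebra.comul)
      - (TensorProduct.assoc k (V ⊗[k] B) B A).toLinearMap ∘ₗ
        LinearMap.rTensor A ((TensorProduct.assoc k V B B).symm.toLinearMap ∘ₗ
          LinearMap.lTensor V (Coalgebra.comul : B →ₗ[k] B ⊗[k] B))) ∘ₗ
    ((TensorProduct.assoc k V B A).symm.toLinearMap ∘ₗ
      LinearMap.lTensor V (LinearMap.rTensor A πGK ∘ₗ Coalgebra.comul)) = 0 := by
  have hΔB : ∀ a : A, (Coalgebra.comul (πGK a) : B ⊗[k] B)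
      = TensorProduct.map πGK πGK (Coalgebra.comul a) := fun a => LinearMap.congr_fun hGKΔ a
  apply TensorProduct.ext'
  intro v f
  simp only [comp_apply, LinearMap.sub_apply, LinearEquiv.coe_coe, lTensor_tmul, LinearMap.zero_apply]
  rw [sub_eq_zero]
  have step1 : ∀ t : A ⊗[k] A,
      LinearMap.lTensor (V ⊗[k] B) (LinearMap.rTensor A πGK ∘ₗ Coalgebra.comul)
        ((TensorProduct.assoc k V B A).symm (v ⊗ₜ LinearMap.rTensor A πGK t))
      = TensorProduct.map (TensorProduct.mk k V B v ∘ₗ πGK) (LinearMap.rTensor A πGK)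
          (LinearMap.lTensor A (Coalgebra.comul : A →ₗ[k] A ⊗[k] A) t) := by
    intro t
    induction t using TensorProduct.induction_on with
    | zero => simp only [map_zero, tmul_zero]
    | tmul a a' => simp
    | add x y hx hy => simp only [map_add, tmul_add, hx, hy]
  have step2 : ∀ t : A ⊗[k] A,
      (TensorProduct.assoc k (V ⊗[k] B) B A)
        (LinearMap.rTensor A ((TensorProduct.assoc k V B B).symm.toLinearMap ∘ₗ
            LinearMap.lTensor V (Coalgebra.comul : B →ₗ[k] B ⊗[k] B))
          ((TensorProduct.assoc k V B A).symm (v ⊗ₜ LinearMap.rTensor A πGK t)))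
      = ((TensorProduct.assoc k (V ⊗[k] B) B A).toLinearMap ∘ₗ
          LinearMap.rTensor A ((TensorProduct.assoc k V B B).symm.toLinearMap ∘ₗ
            TensorProduct.mk k V (B ⊗[k] B) v ∘ₗ TensorProduct.map πGK πGK))
          (LinearMap.rTensor A (Coalgebra.comul : A →ₗ[k] A ⊗[k] A) t) := by
    intro t
    induction t using TensorProduct.induction_on with
    | zero => simp only [map_zero, tmul_zero]
    | tmul a a' => simp [hΔB]
    | add x y hx hy => simp only [map_add, tmul_add, hx, hy]
  rw [step1, step2, ← Coalgebra.coassoc_apply]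
  generalize (LinearMap.rTensor A (Coalgebra.comul : A →ₗ[k] A ⊗[k] A)
    (Coalgebra.comul f)) = w
  induction w using TensorProduct.induction_on with
  | zero => simp only [map_zero, tmul_zero]
  | tmul s a'' =>
      induction s using TensorProduct.induction_on with
      | zero => simp only [zero_tmul, map_zero, tmul_zero]
      | tmul a a' => simp
      | add x y hx hy => simp only [add_tmul, map_add, tmul_add, hx, hy]
  | add x y hx hy => simp only [map_add, tmul_add, hx, hy]

/-- `rTensor A D₁ ∘ Φ = N ∘ E` -/
private lemma indst_claimA (πGK : A →ₗ[k] B)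
    (hGKΔ : Coalgebra.comul ∘ₗ πGK = TensorProduct.map πGK πGK ∘ₗ Coalgebra.comul)
    (πKH : B →ₗ[k] C) (ρ : V →ₗ[k] V ⊗[k] C) :
    LinearMap.rTensor A (LinearMap.lTensor V (LinearMap.rTensor B πKH ∘ₗ Coalgebra.comul)
        - (TensorProduct.assoc k V C B).toLinearMap ∘ₗ LinearMap.rTensor B ρ) ∘ₗ
      ((TensorProduct.assoc k V B A).symm.toLinearMap ∘ₗ
        LinearMap.lTensor V (LinearMap.rTensor A πGK ∘ₗ Coalgebra.comul))
    = ((TensorProduct.assoc k V (C ⊗[k] B) A).symm.toLinearMap ∘ₗ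
        LinearMap.lTensor V ((TensorProduct.assoc k C B A).symm.toLinearMap ∘ₗ
          LinearMap.lTensor C (LinearMap.rTensor A πGK ∘ₗ Coalgebra.comul))) ∘ₗ
      (LinearMap.lTensor V (LinearMap.rTensor A (πKH ∘ₗ πGK) ∘ₗ Coalgebra.comul)
        - (TensorProduct.assoc k V C A).toLinearMap ∘ₗ LinearMap.rTensor A ρ) := by
  have hΔB : ∀ a : A, (Coalgebra.comul (πGK a) : B ⊗[k] B)
      = TensorProduct.map πGK πGK (Coalgebra.comul a) := fun a => LinearMap.congr_fun hGKΔ a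
  have hsplit : ∀ x : (V ⊗[k] B) ⊗[k] A,
      LinearMap.rTensor A (LinearMap.lTensor V (LinearMap.rTensor B πKH ∘ₗ Coalgebra.comul)
          - (TensorProduct.assoc k V C B).toLinearMap ∘ₗ LinearMap.rTensor B ρ) x
      = LinearMap.rTensor A (LinearMap.lTensor V (LinearMap.rTensor B πKH ∘ₗ Coalgebra.comul)) x
        - LinearMap.rTensor A ((TensorProduct.assoc k V C B).toLinearMap ∘ₗ
            LinearMap.rTensor B ρ) x := by
    intro x; rw [LinearMap.rTensor_sub]; exact rfl
  have hsplit2 : ∀ x : V ⊗[k] A,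
      (LinearMap.lTensor V (LinearMap.rTensor A (πKH ∘ₗ πGK) ∘ₗ Coalgebra.comul)
        - (TensorProduct.assoc k V C A).toLinearMap ∘ₗ LinearMap.rTensor A ρ) x
      = LinearMap.lTensor V (LinearMap.rTensor A (πKH ∘ₗ πGK) ∘ₗ Coalgebra.comul) x
        - ((TensorProduct.assoc k V C A).toLinearMap ∘ₗ LinearMap.rTensor A ρ) x :=
    fun _ => rfl
  apply TensorProduct.ext'
  intro v f
  simp only [comp_apply, LinearEquiv.coe_coe, lTensor_tmul]
  rw [hsplit, hsplit2, map_sub, map_sub]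
  congr 1
  · -- first terms
    have step1 : ∀ t : A ⊗[k] A,
        LinearMap.rTensor A (LinearMap.lTensor V (LinearMap.rTensor B πKH ∘ₗ Coalgebra.comul))
          ((TensorProduct.assoc k V B A).symm (v ⊗ₜ LinearMap.rTensor A πGK t))
        = LinearMap.rTensor A (TensorProduct.mk k V (C ⊗[k] B) v ∘ₗ
            LinearMap.rTensor B πKH ∘ₗ TensorProduct.map πGK πGK)
            (LinearMap.rTensor A (Coalgebra.comul : A →ₗ[k] A ⊗[k] A) t) := by
      intro t
      induction t using TensorProduct.induction_on with
      | zero => simp only [map_zero, tmul_zero]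
      | tmul a a' =>
          simp only [comp_apply, LinearEquiv.coe_coe, rTensor_tmul,
            TensorProduct.assoc_symm_tmul, lTensor_tmul, TensorProduct.mk_apply, hΔB]
      | add x y hx hy => simp only [map_add, tmul_add, hx, hy]
    have step3 : ∀ t : A ⊗[k] A,
        (TensorProduct.assoc k V (C ⊗[k] B) A).symm
          (v ⊗ₜ (TensorProduct.assoc k C B A).symm
            (LinearMap.lTensor C (LinearMap.rTensor A πGK ∘ₗ Coalgebra.comul)
              (LinearMap.rTensor A (πKH ∘ₗ πGK) t)))
        = ((TensorProduct.assoc k V (C ⊗[k] B) A).symm.toLinearMap ∘ₗ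
            TensorProduct.mk k V ((C ⊗[k] B) ⊗[k] A) v ∘ₗ
            (TensorProduct.assoc k C B A).symm.toLinearMap ∘ₗ
            TensorProduct.map (πKH ∘ₗ πGK) (LinearMap.rTensor A πGK))
            (LinearMap.lTensor A (Coalgebra.comul : A →ₗ[k] A ⊗[k] A) t) := by
      intro t
      induction t using TensorProduct.induction_on with
      | zero => simp only [map_zero, tmul_zero]
      | tmul a a' => simp
      | add x y hx hy => simp only [map_add, tmul_add, hx, hy]
    simp only [comp_apply, LinearEquiv.coe_coe, lTensor_tmul]
    rw [step1, step3, ← Coalgebra.coassoc_apply]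
    generalize (LinearMap.rTensor A (Coalgebra.comul : A →ₗ[k] A ⊗[k] A)
      (Coalgebra.comul f)) = w
    induction w using TensorProduct.induction_on with
    | zero => simp only [map_zero, tmul_zero]
    | tmul s a'' =>
        induction s using TensorProduct.induction_on with
        | zero => simp only [zero_tmul, map_zero, tmul_zero]
        | tmul a a' => simp
        | add x y hx hy => simp only [add_tmul, map_add, tmul_add, hx, hy]
    | add x y hx hy => simp only [map_add, tmul_add, hx, hy]
  · -- second terms
    have step2 : ∀ t : A ⊗[k] A,
        LinearMap.rTensor A ((TensorProduct.assoc k V C B).toLinearMap ∘ₗ LinearMap.rTensor B ρ)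
          ((TensorProduct.assoc k V B A).symm (v ⊗ₜ LinearMap.rTensor A πGK t))
        = LinearMap.rTensor A (TensorProduct.assoc k V C B).toLinearMap
            ((TensorProduct.assoc k (V ⊗[k] C) B A).symm
              ((ρ v) ⊗ₜ LinearMap.rTensor A πGK t)) := by
      intro t
      induction t using TensorProduct.induction_on with
      | zero => simp only [map_zero, tmul_zero]
      | tmul a a' => simp
      | add x y hx hy => simp only [map_add, tmul_add, hx, hy]
    have step4 : ∀ r : V ⊗[k] C,
        (TensorProduct.assoc k V (C ⊗[k] B) A).symm
          ((LinearMap.lTensor V ((TensorProduct.assoc k C B A).symm.toLinearMap ∘ₗ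
            LinearMap.lTensor C (LinearMap.rTensor A πGK ∘ₗ Coalgebra.comul)))
            ((TensorProduct.assoc k V C A) (r ⊗ₜ f)))
        = LinearMap.rTensor A (TensorProduct.assoc k V C B).toLinearMap
            ((TensorProduct.assoc k (V ⊗[k] C) B A).symm
              (r ⊗ₜ LinearMap.rTensor A πGK (Coalgebra.comul f))) := by
      intro r
      induction r using TensorProduct.induction_on with
      | zero => simp only [zero_tmul, map_zero]
      | tmul v0 v1 =>
          have inner : ∀ s : B ⊗[k] A,
              (TensorProduct.assoc k V (C ⊗[k] B) A).symm
                (v0 ⊗ₜ ((TensorProduct.assoc k C B A).symm (v1 ⊗ₜ s)))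
              = LinearMap.rTensor A (TensorProduct.assoc k V C B).toLinearMap
                  ((TensorProduct.assoc k (V ⊗[k] C) B A).symm ((v0 ⊗ₜ v1) ⊗ₜ s)) := by
            intro s
            induction s using TensorProduct.induction_on with
            | zero => simp only [map_zero, tmul_zero]
            | tmul b a => simp
            | add x y hx hy => simp only [map_add, tmul_add, hx, hy]
          simp only [comp_apply, LinearEquiv.coe_coe, TensorProduct.assoc_tmul, lTensor_tmul]
          exact inner _
      | add x y hx hy => simp only [add_tmul, map_add, tmul_add, hx, hy]
    simp only [comp_apply, LinearEquiv.coe_coe, rTensor_tmul]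
    rw [step2]
    exact (step4 (ρ v)).symm

/-- counit collapse: `(id ⊗ ε)(v ⊗ Δb)` reassociated -/
private lemma indst_key2 (v : V) (s : B ⊗[k] B) :
    LinearMap.rTensor B ((TensorProduct.rid k V).toLinearMap ∘ₗ
        LinearMap.lTensor V (Coalgebra.counit : B →ₗ[k] k))
      ((TensorProduct.assoc k V B B).symm (v ⊗ₜ s))
    = v ⊗ₜ (TensorProduct.lid k B) (LinearMap.rTensor B (Coalgebra.counit : B →ₗ[k] k) s) := by
  induction s using TensorProduct.induction_on with
  | zero => simp only [map_zero, tmul_zero]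
  | tmul b1 b2 => simp [smul_tmul, tmul_smul]
  | add x y hx hy => simp only [map_add, tmul_add, hx, hy]

private lemma indst_key2' (v : V) (b : B) :
    LinearMap.rTensor B ((TensorProduct.rid k V).toLinearMap ∘ₗ
        LinearMap.lTensor V (Coalgebra.counit : B →ₗ[k] k))
      ((TensorProduct.assoc k V B B).symm (v ⊗ₜ (Coalgebra.comul b : B ⊗[k] B)))
    = v ⊗ₜ b := by
  rw [indst_key2, Coalgebra.rTensor_counit_comul, TensorProduct.lid_tmul, one_smul]

/-- `Φ ∘ Ψ - id = P ∘ M₂` -/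
private lemma indst_claimP (πGK : A →ₗ[k] B) :
    ((TensorProduct.assoc k V B A).symm.toLinearMap ∘ₗ
        LinearMap.lTensor V (LinearMap.rTensor A πGK ∘ₗ Coalgebra.comul)) ∘ₗ
      LinearMap.rTensor A ((TensorProduct.rid k V).toLinearMap ∘ₗ
        LinearMap.lTensor V (Coalgebra.counit : B →ₗ[k] k)) - LinearMap.id
    = (LinearMap.rTensor A (LinearMap.rTensor B ((TensorProduct.rid k V).toLinearMap ∘ₗ
          LinearMap.lTensor V (Coalgebra.counit : B →ₗ[k] k))) ∘ₗ
        (TensorProduct.assoc k (V ⊗[k] B) B A).symm.toLinearMap) ∘ₗ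
      (LinearMap.lTensor (V ⊗[k] B) (LinearMap.rTensor A πGK ∘ₗ Coalgebra.comul)
        - (TensorProduct.assoc k (V ⊗[k] B) B A).toLinearMap ∘ₗ
          LinearMap.rTensor A ((TensorProduct.assoc k V B B).symm.toLinearMap ∘ₗ
            LinearMap.lTensor V (Coalgebra.comul : B →ₗ[k] B ⊗[k] B))) := by
  apply TensorProduct.ext_threefold
  intro v b f
  rw [LinearMap.sub_apply]
  simp only [comp_apply]
  rw [LinearMap.sub_apply, map_sub, map_sub]
  have t2 : ∀ t : A ⊗[k] A,
      LinearMap.rTensor A (LinearMap.rTensor B ((TensorProduct.rid k V).toLinearMap ∘ₗ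
          LinearMap.lTensor V (Coalgebra.counit : B →ₗ[k] k)))
        ((TensorProduct.assoc k (V ⊗[k] B) B A).symm ((v ⊗ₜ b) ⊗ₜ LinearMap.rTensor A πGK t))
      = (Coalgebra.counit b : k) •
          (TensorProduct.assoc k V B A).symm (v ⊗ₜ LinearMap.rTensor A πGK t) := by
    intro t
    induction t using TensorProduct.induction_on with
    | zero => simp only [map_zero, tmul_zero, smul_zero]
    | tmul a a' => simp [smul_tmul, tmul_smul]
    | add x y hx hy => simp only [map_add, tmul_add, smul_add, hx, hy]
  have t3 :
      LinearMap.rTensor A (LinearMap.rTensor B ((TensorProduct.rid k V).toLinearMap ∘ₗ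
          LinearMap.lTensor V (Coalgebra.counit : B →ₗ[k] k)))
        ((TensorProduct.assoc k (V ⊗[k] B) B A).symm
          ((TensorProduct.assoc k (V ⊗[k] B) B A)
            (((TensorProduct.assoc k V B B).symm
                (v ⊗ₜ (Coalgebra.comul b : B ⊗[k] B))) ⊗ₜ f)))
      = (v ⊗ₜ b) ⊗ₜ f := by
    rw [LinearEquiv.symm_apply_apply, rTensor_tmul, indst_key2' v b]
  simp only [comp_apply, LinearEquiv.coe_coe, lTensor_tmul, rTensor_tmul,
    TensorProduct.rid_tmul]
  rw [t2, t3]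
  simp only [LinearMap.id_coe, id_eq, ← smul_tmul', map_smul]


/-- `E ∘ Ψ = S ∘ M₂ + U ∘ rTensor A D₁` -/
private lemma indst_claimC (πGK : A →ₗ[k] B) (πKH : B →ₗ[k] C) (ρ : V →ₗ[k] V ⊗[k] C) :
    (LinearMap.lTensor V (LinearMap.rTensor A (πKH ∘ₗ πGK) ∘ₗ Coalgebra.comul)
        - (TensorProduct.assoc k V C A).toLinearMap ∘ₗ LinearMap.rTensor A ρ) ∘ₗ
      LinearMap.rTensor A ((TensorProduct.rid k V).toLinearMap ∘ₗ
        LinearMap.lTensor V (Coalgebra.counit : B →ₗ[k] k))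
    = TensorProduct.map ((TensorProduct.rid k V).toLinearMap ∘ₗ
          LinearMap.lTensor V (Coalgebra.counit : B →ₗ[k] k)) (LinearMap.rTensor A πKH) ∘ₗ
        (LinearMap.lTensor (V ⊗[k] B) (LinearMap.rTensor A πGK ∘ₗ Coalgebra.comul)
          - (TensorProduct.assoc k (V ⊗[k] B) B A).toLinearMap ∘ₗ
            LinearMap.rTensor A ((TensorProduct.assoc k V B B).symm.toLinearMap ∘ₗ
              LinearMap.lTensor V (Coalgebra.comul : B →ₗ[k] B ⊗[k] B)))
      + ((TensorProduct.assoc k V C A).toLinearMap ∘ₗ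
          LinearMap.rTensor A (LinearMap.lTensor V ((TensorProduct.rid k C).toLinearMap ∘ₗ
            LinearMap.lTensor C (Coalgebra.counit : B →ₗ[k] k)))) ∘ₗ
        LinearMap.rTensor A (LinearMap.lTensor V (LinearMap.rTensor B πKH ∘ₗ Coalgebra.comul)
          - (TensorProduct.assoc k V C B).toLinearMap ∘ₗ LinearMap.rTensor B ρ) := by
  have hsplitD : ∀ x : (V ⊗[k] B) ⊗[k] A,
      LinearMap.rTensor A (LinearMap.lTensor V (LinearMap.rTensor B πKH ∘ₗ Coalgebra.comul)
          - (TensorProduct.assoc k V C B).toLinearMap ∘ₗ LinearMap.rTensor B ρ) x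
      = LinearMap.rTensor A (LinearMap.lTensor V (LinearMap.rTensor B πKH ∘ₗ Coalgebra.comul)) x
        - LinearMap.rTensor A ((TensorProduct.assoc k V C B).toLinearMap ∘ₗ
            LinearMap.rTensor B ρ) x := by
    intro x; rw [LinearMap.rTensor_sub]; exact rfl
  apply TensorProduct.ext_threefold
  intro v b f
  rw [LinearMap.add_apply]
  simp only [comp_apply]
  rw [LinearMap.sub_apply, LinearMap.sub_apply, hsplitD, map_sub, map_sub, map_sub]
  simp only [comp_apply, LinearEquiv.coe_coe]
  -- now six terms
  have cs1 :
      LinearMap.lTensor V (LinearMap.rTensor A (πKH ∘ₗ πGK) ∘ₗ Coalgebra.comul)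
        (LinearMap.rTensor A ((TensorProduct.rid k V).toLinearMap ∘ₗ
          LinearMap.lTensor V (Coalgebra.counit : B →ₗ[k] k)) ((v ⊗ₜ b) ⊗ₜ f))
      = TensorProduct.map ((TensorProduct.rid k V).toLinearMap ∘ₗ
          LinearMap.lTensor V (Coalgebra.counit : B →ₗ[k] k)) (LinearMap.rTensor A πKH)
          (LinearMap.lTensor (V ⊗[k] B) (LinearMap.rTensor A πGK ∘ₗ Coalgebra.comul)
            ((v ⊗ₜ b) ⊗ₜ f)) := by
    simp only [rTensor_tmul, lTensor_tmul, TensorProduct.map_tmul, comp_apply,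
      LinearEquiv.coe_coe, TensorProduct.rid_tmul, LinearMap.rTensor_comp_apply]
  have cs2' : ∀ r : V ⊗[k] C,
      (Coalgebra.counit b : k) • (TensorProduct.assoc k V C A) (r ⊗ₜ f)
      = (TensorProduct.assoc k V C A)
          ((LinearMap.lTensor V ((TensorProduct.rid k C).toLinearMap ∘ₗ
              LinearMap.lTensor C (Coalgebra.counit : B →ₗ[k] k)))
            ((TensorProduct.assoc k V C B) (r ⊗ₜ b)) ⊗ₜ f) := by
    intro r
    induction r using TensorProduct.induction_on with
    | zero => simp only [zero_tmul, map_zero, smul_zero, tmul_zero]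
    | tmul v0 v1 => simp [smul_tmul, tmul_smul]
    | add x y hx hy => simp only [add_tmul, map_add, smul_add, tmul_add, hx, hy]
  have cs2 :
      (TensorProduct.assoc k V C A)
        (LinearMap.rTensor A ρ
          (LinearMap.rTensor A ((TensorProduct.rid k V).toLinearMap ∘ₗ
            LinearMap.lTensor V (Coalgebra.counit : B →ₗ[k] k)) ((v ⊗ₜ b) ⊗ₜ f)))
      = (TensorProduct.assoc k V C A)
          (LinearMap.rTensor A (LinearMap.lTensor V ((TensorProduct.rid k C).toLinearMap ∘ₗ
              LinearMap.lTensor C (Coalgebra.counit : B →ₗ[k] k)))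
            (LinearMap.rTensor A ((TensorProduct.assoc k V C B).toLinearMap ∘ₗ
              LinearMap.rTensor B ρ) ((v ⊗ₜ b) ⊗ₜ f))) := by
    simp only [rTensor_tmul, comp_apply, LinearEquiv.coe_coe, lTensor_tmul,
      TensorProduct.rid_tmul, map_smul, ← smul_tmul']
    exact cs2' (ρ v)
  have cs3 :
      TensorProduct.map ((TensorProduct.rid k V).toLinearMap ∘ₗ
          LinearMap.lTensor V (Coalgebra.counit : B →ₗ[k] k)) (LinearMap.rTensor A πKH)
        ((TensorProduct.assoc k (V ⊗[k] B) B A)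
          (LinearMap.rTensor A ((TensorProduct.assoc k V B B).symm.toLinearMap ∘ₗ
            LinearMap.lTensor V (Coalgebra.comul : B →ₗ[k] B ⊗[k] B)) ((v ⊗ₜ b) ⊗ₜ f)))
      = (TensorProduct.assoc k V C A)
          (LinearMap.rTensor A (LinearMap.lTensor V ((TensorProduct.rid k C).toLinearMap ∘ₗ
              LinearMap.lTensor C (Coalgebra.counit : B →ₗ[k] k)))
            (LinearMap.rTensor A (LinearMap.lTensor V (LinearMap.rTensor B πKH ∘ₗ
              Coalgebra.comul)) ((v ⊗ₜ b) ⊗ₜ f))) := by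
    -- LHS
    have lhs1 : ∀ s : B ⊗[k] B,
        TensorProduct.map ((TensorProduct.rid k V).toLinearMap ∘ₗ
            LinearMap.lTensor V (Coalgebra.counit : B →ₗ[k] k)) (LinearMap.rTensor A πKH)
          ((TensorProduct.assoc k (V ⊗[k] B) B A)
            (((TensorProduct.assoc k V B B).symm (v ⊗ₜ s)) ⊗ₜ f))
        = v ⊗ₜ (TensorProduct.lid k (C ⊗[k] A))
            (TensorProduct.map (Coalgebra.counit : B →ₗ[k] k)
              ((TensorProduct.mk k C A).flip f ∘ₗ πKH) s) := by
      intro s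
      induction s using TensorProduct.induction_on with
      | zero => simp only [map_zero, tmul_zero, zero_tmul]
      | tmul b1 b2 => simp [smul_tmul, tmul_smul]
      | add x y hx hy => simp only [map_add, tmul_add, add_tmul, hx, hy]
    -- RHS collapse
    have hεC : (TensorProduct.rid k C)
          (LinearMap.lTensor C (Coalgebra.counit : B →ₗ[k] k)
            (LinearMap.rTensor B πKH (Coalgebra.comul b))) = πKH b := by
      have h1 : LinearMap.lTensor C (Coalgebra.counit : B →ₗ[k] k)
            (LinearMap.rTensor B πKH (Coalgebra.comul b))
          = TensorProduct.map πKH (Coalgebra.counit : B →ₗ[k] k) (Coalgebra.comul b) := by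
        rw [← LinearMap.lTensor_comp_rTensor]; rfl
      have h2 : TensorProduct.map πKH (Coalgebra.counit : B →ₗ[k] k) (Coalgebra.comul b)
          = LinearMap.rTensor k πKH
              (LinearMap.lTensor B (Coalgebra.counit : B →ₗ[k] k) (Coalgebra.comul b)) := by
        rw [← LinearMap.rTensor_comp_lTensor]; rfl
      rw [h1, h2, Coalgebra.lTensor_counit_comul,
        rTensor_tmul, TensorProduct.rid_tmul, one_smul]
    have hmap : TensorProduct.map (Coalgebra.counit : B →ₗ[k] k)
          ((TensorProduct.mk k C A).flip f ∘ₗ πKH) (Coalgebra.comul b)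
        = (1 : k) ⊗ₜ (πKH b ⊗ₜ f) := by
      have h1 : TensorProduct.map (Coalgebra.counit : B →ₗ[k] k)
            ((TensorProduct.mk k C A).flip f ∘ₗ πKH) (Coalgebra.comul b)
          = LinearMap.lTensor k ((TensorProduct.mk k C A).flip f ∘ₗ πKH)
              (LinearMap.rTensor B (Coalgebra.counit : B →ₗ[k] k) (Coalgebra.comul b)) := by
        rw [← LinearMap.lTensor_comp_rTensor]; rfl
      rw [h1, Coalgebra.rTensor_counit_comul, lTensor_tmul]
      rfl
    simp only [rTensor_tmul, lTensor_tmul, comp_apply, LinearEquiv.coe_coe]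
    rw [lhs1, hmap, hεC, TensorProduct.lid_tmul, one_smul, TensorProduct.assoc_tmul]
  rw [cs1, cs2, cs3]
  abel

end IndStages

/-- Induction in stages: with `πGK : A → B` a surjective Hopf algebra morphism,
`πKH : B → C` a surjective coalgebra morphism, `πGH = πKH ∘ πGK`, and `(V, ρ)`
a right `C`-comodule, the map `id_V ⊗ L_GK` restricts to an isomorphism of
right `A`-comodules `ind_H^G(ρ) ≅ ind_K^G(ind_H^K(ρ))`, with inverse induced by
`v ⊗ g ⊗ f ↦ ε_B(g) v ⊗ f`. -/
theorem induction_in_stages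
    {k A B C V : Type*} [Field k] [Ring A] [HopfAlgebra k A]
    [Ring B] [HopfAlgebra k B]
    [AddCommGroup C] [Module k C] [Coalgebra k C]
    [AddCommGroup V] [Module k V]
    (πGK : A →ₗ[k] B) (hGKsurj : Function.Surjective πGK)
    (hGKone : πGK 1 = 1) (hGKmul : ∀ a b : A, πGK (a * b) = πGK a * πGK b)
    (hGKΔ : Coalgebra.comul ∘ₗ πGK = TensorProduct.map πGK πGK ∘ₗ Coalgebra.comul)
    (hGKε : (Coalgebra.counit : B →ₗ[k] k) ∘ₗ πGK = (Coalgebra.counit : A →ₗ[k] k))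
    (πKH : B →ₗ[k] C) (hKHsurj : Function.Surjective πKH)
    (hKHΔ : Coalgebra.comul ∘ₗ πKH = TensorProduct.map πKH πKH ∘ₗ Coalgebra.comul)
    (hKHε : (Coalgebra.counit : C →ₗ[k] k) ∘ₗ πKH = (Coalgebra.counit : B →ₗ[k] k))
    (ρ : V →ₗ[k] V ⊗[k] C)
    (hρcounit : (TensorProduct.rid k V).toLinearMap ∘ₗ
      LinearMap.lTensor V (Coalgebra.counit : C →ₗ[k] k) ∘ₗ ρ = LinearMap.id)
    (hρcoassoc : LinearMap.lTensor V (Coalgebra.comul : C →ₗ[k] C ⊗[k] C) ∘ₗ ρ =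
      (TensorProduct.assoc k V C C).toLinearMap ∘ₗ LinearMap.rTensor C ρ ∘ₗ ρ) :
    let LGK : A →ₗ[k] B ⊗[k] A := LinearMap.rTensor A πGK ∘ₗ Coalgebra.comul
    let LKH : B →ₗ[k] C ⊗[k] B := LinearMap.rTensor B πKH ∘ₗ Coalgebra.comul
    let LGH : A →ₗ[k] C ⊗[k] A :=
      LinearMap.rTensor A (πKH ∘ₗ πGK) ∘ₗ Coalgebra.comul
    -- `ind_H^G(ρ) ⊆ V ⊗ A`
    let indGH : Submodule k (V ⊗[k] A) := LinearMap.ker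
      (LinearMap.lTensor V LGH
        - (TensorProduct.assoc k V C A).toLinearMap ∘ₗ LinearMap.rTensor A ρ)
    -- the defining condition of `ind_H^K(ρ) ⊆ V ⊗ B`
    let D₁ : V ⊗[k] B →ₗ[k] V ⊗[k] (C ⊗[k] B) :=
      LinearMap.lTensor V LKH
        - (TensorProduct.assoc k V C B).toLinearMap ∘ₗ LinearMap.rTensor B ρ
    -- the right `B`-comodule structure `id_V ⊗ Δ_B` on `ind_H^K(ρ)`
    let ρW : V ⊗[k] B →ₗ[k] (V ⊗[k] B) ⊗[k] B :=
      (TensorProduct.assoc k V B B).symm.toLinearMap ∘ₗ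
        LinearMap.lTensor V (Coalgebra.comul : B →ₗ[k] B ⊗[k] B)
    -- `ind_K^G(ind_H^K(ρ)) ⊆ (V ⊗ B) ⊗ A`
    let ind2 : Submodule k ((V ⊗[k] B) ⊗[k] A) :=
      LinearMap.ker (LinearMap.rTensor A D₁) ⊓
      LinearMap.ker (LinearMap.lTensor (V ⊗[k] B) LGK
        - (TensorProduct.assoc k (V ⊗[k] B) B A).toLinearMap ∘ₗ LinearMap.rTensor A ρW)
    -- the comparison map `id_V ⊗ L_GK` and its inverse `v ⊗ g ⊗ f ↦ ε_B(g) v ⊗ f`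
    let Φ : V ⊗[k] A →ₗ[k] (V ⊗[k] B) ⊗[k] A :=
      (TensorProduct.assoc k V B A).symm.toLinearMap ∘ₗ LinearMap.lTensor V LGK
    let Ψ : (V ⊗[k] B) ⊗[k] A →ₗ[k] V ⊗[k] A :=
      LinearMap.rTensor A ((TensorProduct.rid k V).toLinearMap ∘ₗ
        LinearMap.lTensor V (Coalgebra.counit : B →ₗ[k] k))
    -- the coactions `id ⊗ Δ_A`
    let ψ₀ : V ⊗[k] A →ₗ[k] (V ⊗[k] A) ⊗[k] A :=
      (TensorProduct.assoc k V A A).symm.toLinearMap ∘ₗ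
        LinearMap.lTensor V (Coalgebra.comul : A →ₗ[k] A ⊗[k] A)
    let ψ₂ : (V ⊗[k] B) ⊗[k] A →ₗ[k] ((V ⊗[k] B) ⊗[k] A) ⊗[k] A :=
      (TensorProduct.assoc k (V ⊗[k] B) A A).symm.toLinearMap ∘ₗ
        LinearMap.lTensor (V ⊗[k] B) (Coalgebra.comul : A →ₗ[k] A ⊗[k] A)
    Submodule.map Φ indGH = ind2 ∧
    Ψ ∘ₗ Φ = LinearMap.id ∧
    (∀ G ∈ ind2, Φ (Ψ G) = G) ∧
    ψ₂ ∘ₗ Φ = LinearMap.rTensor A Φ ∘ₗ ψ₀ := by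
  intro LGK LKH LGH indGH D₁ ρW ind2 Φ Ψ ψ₀ ψ₂
  -- part 3 as a reusable fact
  have key3 : ∀ G : (V ⊗[k] B) ⊗[k] A,
      (LinearMap.lTensor (V ⊗[k] B) (LinearMap.rTensor A πGK ∘ₗ Coalgebra.comul)
        - (TensorProduct.assoc k (V ⊗[k] B) B A).toLinearMap ∘ₗ
          LinearMap.rTensor A ((TensorProduct.assoc k V B B).symm.toLinearMap ∘ₗ
            LinearMap.lTensor V (Coalgebra.comul : B →ₗ[k] B ⊗[k] B))) G = 0 →
      (((TensorProduct.assoc k V B A).symm.toLinearMap ∘ₗ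
        LinearMap.lTensor V (LinearMap.rTensor A πGK ∘ₗ Coalgebra.comul))
        (LinearMap.rTensor A ((TensorProduct.rid k V).toLinearMap ∘ₗ
          LinearMap.lTensor V (Coalgebra.counit : B →ₗ[k] k)) G)) = G := by
    intro G hG2
    have h := LinearMap.congr_fun (indst_claimP (V := V) πGK) G
    rw [LinearMap.sub_apply] at h
    simp only [comp_apply] at h
    rw [hG2, map_zero, map_zero] at h
    rw [sub_eq_zero] at h
    exact h
  refine ⟨?_, ?_, ?_, ?_⟩
  · -- Submodule.map Φ indGH = ind2
    apply le_antisymm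
    · intro x hx
      obtain ⟨F, hF, rfl⟩ := Submodule.mem_map.mp hx
      have hF0 : (LinearMap.lTensor V (LinearMap.rTensor A (πKH ∘ₗ πGK) ∘ₗ Coalgebra.comul)
          - (TensorProduct.assoc k V C A).toLinearMap ∘ₗ LinearMap.rTensor A ρ) F = 0 :=
        LinearMap.mem_ker.mp hF
      refine Submodule.mem_inf.mpr ⟨LinearMap.mem_ker.mpr ?_, LinearMap.mem_ker.mpr ?_⟩
      · have h := LinearMap.congr_fun (indst_claimA πGK hGKΔ πKH ρ) F
        simp only [comp_apply] at h
        exact h.trans (by rw [hF0]; simp)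
      · have h := LinearMap.congr_fun (indst_claimB (V := V) πGK hGKΔ) F
        simp only [comp_apply, LinearMap.zero_apply] at h
        exact h
    · intro G hG
      have hG1 : LinearMap.rTensor A
            (LinearMap.lTensor V (LinearMap.rTensor B πKH ∘ₗ Coalgebra.comul)
              - (TensorProduct.assoc k V C B).toLinearMap ∘ₗ LinearMap.rTensor B ρ) G = 0 :=
        LinearMap.mem_ker.mp (Submodule.mem_inf.mp hG).1
      have hG2 : (LinearMap.lTensor (V ⊗[k] B) (LinearMap.rTensor A πGK ∘ₗ Coalgebra.comul)
          - (TensorProduct.assoc k (V ⊗[k] B) B A).toLinearMap ∘ₗ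
            LinearMap.rTensor A ((TensorProduct.assoc k V B B).symm.toLinearMap ∘ₗ
              LinearMap.lTensor V (Coalgebra.comul : B →ₗ[k] B ⊗[k] B))) G = 0 :=
        LinearMap.mem_ker.mp (Submodule.mem_inf.mp hG).2
      refine Submodule.mem_map.mpr ⟨Ψ G, LinearMap.mem_ker.mpr ?_, key3 G hG2⟩
      have h := LinearMap.congr_fun (indst_claimC πGK πKH ρ) G
      simp only [comp_apply, LinearMap.add_apply] at h
      rw [hG1, hG2, map_zero, map_zero, map_zero, add_zero] at h
      exact h
  · exact indst_claim2 πGK hGKε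
  · intro G hG
    exact key3 G (LinearMap.mem_ker.mp (Submodule.mem_inf.mp hG).2)
  · exact indst_claim4 πGK
end

section
/- Let A be a Hopf algebra, π : A → B a surjective Hopf algebra morphism, and φ : B → A a convolution-invertible linear map with φ(1) = 1 and (π ⊗ id)Δ_A ∘ φ = (1_B ⊗ φ) ∘ Δ_B (interpreting the right side as b ↦ Σ b_(1) ⊗ φ(b_(2))). Then the convolution inverse φ⁻¹ satisfies (π ⊗ id)Δ_A ∘ φ⁻¹ = (S_B ⊗ φ⁻¹) ∘ τ ∘ Δ_B, where S_B is the antipode of B and τ swaps tensor factors; i.e. for all b ∈ B, Σ π((φ⁻¹(b))_(1)) ⊗ (φ⁻¹(b))_(2) = Σ S_B(b_(2)) ⊗ φ⁻¹(b_(1)). -/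
open TensorProduct LinearMap

section ConvAux

variable {k B C : Type*} [CommSemiring k] [AddCommMonoid B] [Module k B]

/-- Convolution product of linear maps from a coalgebra to an algebra. -/
noncomputable def conv [CoalgebraStruct k B] [Semiring C] [Algebra k C]
    (f g : B →ₗ[k] C) : B →ₗ[k] C :=
  LinearMap.mul' k C ∘ₗ TensorProduct.map f g ∘ₗ Coalgebra.comul

/-- Convolution unit. -/
noncomputable def cunit [CoalgebraStruct k B] [Semiring C] [Algebra k C] : B →ₗ[k] C :=
  Algebra.linearMap k C ∘ₗ Coalgebra.counit

variable [Coalgebra k B] [Semiring C] [Algebra k C]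

lemma cunit_conv (f : B →ₗ[k] C) : conv cunit f = f := by
  have h1 : TensorProduct.map (Algebra.linearMap k C ∘ₗ (Coalgebra.counit : B →ₗ[k] k)) f
      = TensorProduct.map (Algebra.linearMap k C) f ∘ₗ
        LinearMap.rTensor B (Coalgebra.counit : B →ₗ[k] k) := by
    rw [LinearMap.rTensor, ← TensorProduct.map_comp, LinearMap.comp_id]
  ext b
  rw [conv, cunit, LinearMap.comp_apply, LinearMap.comp_apply, h1]
  simp only [LinearMap.comp_apply, Coalgebra.rTensor_counit_comul, TensorProduct.map_tmul,
    LinearMap.mul'_apply, Algebra.linearMap_apply, map_one, one_mul]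

lemma conv_cunit (f : B →ₗ[k] C) : conv f cunit = f := by
  have h1 : TensorProduct.map f (Algebra.linearMap k C ∘ₗ (Coalgebra.counit : B →ₗ[k] k))
      = TensorProduct.map f (Algebra.linearMap k C) ∘ₗ
        LinearMap.lTensor B (Coalgebra.counit : B →ₗ[k] k) := by
    rw [LinearMap.lTensor, ← TensorProduct.map_comp, LinearMap.comp_id]
  ext b
  rw [conv, cunit, LinearMap.comp_apply, LinearMap.comp_apply, h1]
  simp only [LinearMap.comp_apply, Coalgebra.lTensor_counit_comul, TensorProduct.map_tmul,
    LinearMap.mul'_apply, Algebra.linearMap_apply, map_one, mul_one]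

lemma conv_assoc (f g h : B →ₗ[k] C) : conv (conv f g) h = conv f (conv g h) := by
  have hm : (LinearMap.mul' k C ∘ₗ LinearMap.rTensor C (LinearMap.mul' k C)) =
      ((LinearMap.mul' k C ∘ₗ LinearMap.lTensor C (LinearMap.mul' k C)) ∘ₗ
        (TensorProduct.assoc k C C C).toLinearMap) := by
    apply TensorProduct.ext_threefold; intro x y z; simp [mul_assoc]
  have e1 : TensorProduct.map (conv f g) h =
      LinearMap.rTensor C (LinearMap.mul' k C) ∘ₗ
        TensorProduct.map (TensorProduct.map f g) h ∘ₗ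
        LinearMap.rTensor B (Coalgebra.comul : B →ₗ[k] B ⊗[k] B) :=
    TensorProduct.ext' fun x y => by simp [conv]
  have e2 : TensorProduct.map f (conv g h) =
      LinearMap.lTensor C (LinearMap.mul' k C) ∘ₗ
        TensorProduct.map f (TensorProduct.map g h) ∘ₗ
        LinearMap.lTensor B (Coalgebra.comul : B →ₗ[k] B ⊗[k] B) :=
    TensorProduct.ext' fun x y => by simp [conv]
  ext b
  have hb := congr($(Coalgebra.coassoc (R := k) (A := B)) b)
  simp only [conv, LinearMap.comp_apply, e1, e2, LinearEquiv.coe_coe] at *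
  rw [← hb, TensorProduct.map_map_assoc]
  exact congr($hm (TensorProduct.map (TensorProduct.map f g) h
    ((Coalgebra.comul : B →ₗ[k] B ⊗[k] B).rTensor B (Coalgebra.comul b))))

lemma comp_conv {D : Type*} [Semiring D] [Algebra k D] (g : C →ₗ[k] D)
    (hg : LinearMap.mul' k D ∘ₗ TensorProduct.map g g = g ∘ₗ LinearMap.mul' k C)
    (f h : B →ₗ[k] C) : conv (g ∘ₗ f) (g ∘ₗ h) = g ∘ₗ conv f h := by
  ext b
  have := congr($hg (TensorProduct.map f h (Coalgebra.comul b)))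
  simpa [conv, TensorProduct.map_comp] using this

lemma comp_cunit {D : Type*} [Semiring D] [Algebra k D] (g : C →ₗ[k] D)
    (hg1 : g ∘ₗ Algebra.linearMap k C = Algebra.linearMap k D) :
    g ∘ₗ (cunit : B →ₗ[k] C) = cunit := by
  rw [cunit, ← LinearMap.comp_assoc, hg1]; rfl

end ConvAux
/-- If `φ : B → A` is a left section of the surjective Hopf algebra morphism
`π : A → B` (convolution invertible, `φ(1) = 1`, and
`(π ⊗ id)Δ_A ∘ φ = (1 ⊗ φ) ∘ Δ_B`), then its convolution inverse satisfies
`(π ⊗ id)Δ_A ∘ φ⁻¹ = (S_B ⊗ φ⁻¹) ∘ τ ∘ Δ_B`. -/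
theorem section_convolution_inverse
    {k A B : Type*} [Field k] [Ring A] [HopfAlgebra k A]
    [Ring B] [HopfAlgebra k B]
    (π : A →ₗ[k] B) (hsurj : Function.Surjective π)
    (hπone : π 1 = 1) (hπmul : ∀ a b : A, π (a * b) = π a * π b)
    (hπΔ : Coalgebra.comul ∘ₗ π = TensorProduct.map π π ∘ₗ Coalgebra.comul)
    (hπε : (Coalgebra.counit : B →ₗ[k] k) ∘ₗ π = (Coalgebra.counit : A →ₗ[k] k))
    (φ φinv : B →ₗ[k] A)
    -- `φinv` is the convolution inverse of `φ`
    (hφinv₁ : LinearMap.mul' k A ∘ₗ TensorProduct.map φ φinv ∘ₗ Coalgebra.comul =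
      Algebra.linearMap k A ∘ₗ (Coalgebra.counit : B →ₗ[k] k))
    (hφinv₂ : LinearMap.mul' k A ∘ₗ TensorProduct.map φinv φ ∘ₗ Coalgebra.comul =
      Algebra.linearMap k A ∘ₗ (Coalgebra.counit : B →ₗ[k] k))
    (hφone : φ 1 = 1)
    -- the left section condition  `(π ⊗ id)Δ_A ∘ φ = (1 ⊗ φ) ∘ Δ_B`
    (hsec : (LinearMap.rTensor A π ∘ₗ Coalgebra.comul) ∘ₗ φ =
      LinearMap.lTensor B φ ∘ₗ Coalgebra.comul) :
    (LinearMap.rTensor A π ∘ₗ Coalgebra.comul) ∘ₗ φinv =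
      TensorProduct.map (HopfAlgebra.antipode k : B →ₗ[k] B) φinv ∘ₗ
        (TensorProduct.comm k B B).toLinearMap ∘ₗ Coalgebra.comul := by
  classical
  set S : B →ₗ[k] B := HopfAlgebra.antipode k with hS
  set ιB : B →ₗ[k] B ⊗[k] A :=
    (Algebra.TensorProduct.includeLeft (R := k) (S := k) (A := B) (B := A)).toLinearMap with hιB
  set ιA : A →ₗ[k] B ⊗[k] A :=
    (Algebra.TensorProduct.includeRight (R := k) (A := B) (B := A)).toLinearMap with hιA
  set F : A →ₗ[k] B ⊗[k] A := LinearMap.rTensor A π ∘ₗ Coalgebra.comul with hF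
  -- multiplicativity facts
  have h_mB : LinearMap.mul' k (B ⊗[k] A) ∘ₗ TensorProduct.map ιB ιB =
      ιB ∘ₗ LinearMap.mul' k B := TensorProduct.ext' fun x y => by
    simp [hιB, Algebra.TensorProduct.tmul_mul_tmul]
  have h_mA : LinearMap.mul' k (B ⊗[k] A) ∘ₗ TensorProduct.map ιA ιA =
      ιA ∘ₗ LinearMap.mul' k A := TensorProduct.ext' fun x y => by
    simp [hιA, Algebra.TensorProduct.tmul_mul_tmul]
  -- `rTensor π` is multiplicative
  have hPm0 : LinearMap.rTensor A π =
      (Algebra.TensorProduct.map (AlgHom.ofLinearMap π hπone hπmul) (AlgHom.id k A)).toLinearMap :=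
    TensorProduct.ext' fun a a' => by simp
  have hPm : ∀ z : A ⊗[k] A, LinearMap.rTensor A π z =
      (Algebra.TensorProduct.map (AlgHom.ofLinearMap π hπone hπmul) (AlgHom.id k A)) z :=
    fun z => LinearMap.congr_fun hPm0 z
  have h_mF : LinearMap.mul' k (B ⊗[k] A) ∘ₗ TensorProduct.map F F =
      F ∘ₗ LinearMap.mul' k A := TensorProduct.ext' fun x y => by
    simp only [hF, LinearMap.comp_apply, TensorProduct.map_tmul, LinearMap.mul'_apply,
      Bialgebra.comul_mul]
    rw [hPm, hPm, hPm, map_mul]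
  -- unit facts
  have h_1B : ιB ∘ₗ Algebra.linearMap k B = Algebra.linearMap k (B ⊗[k] A) := by
    ext c; simp [hιB]
  have h_1A : ιA ∘ₗ Algebra.linearMap k A = Algebra.linearMap k (B ⊗[k] A) := by
    ext c; simp [hιA]
  have h_1F : F ∘ₗ Algebra.linearMap k A = Algebra.linearMap k (B ⊗[k] A) := by
    ext c
    simp only [hF, LinearMap.comp_apply, Algebra.linearMap_apply, Algebra.algebraMap_eq_smul_one,
      map_smul, Bialgebra.comul_one]
    rw [Algebra.TensorProduct.one_def, LinearMap.rTensor_tmul, hπone,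
      ← Algebra.TensorProduct.one_def]
  -- decompositions of L and R
  have dL : conv ιB (ιA ∘ₗ φ) = LinearMap.lTensor B φ ∘ₗ Coalgebra.comul := by
    have key : LinearMap.mul' k (B ⊗[k] A) ∘ₗ TensorProduct.map ιB (ιA ∘ₗ φ) =
        LinearMap.lTensor B φ := TensorProduct.ext' fun x y => by
      simp [hιA, hιB, Algebra.TensorProduct.tmul_mul_tmul]
    rw [conv, ← LinearMap.comp_assoc, key]
  have dR : conv (ιA ∘ₗ φinv) (ιB ∘ₗ S) =
      TensorProduct.map S φinv ∘ₗ (TensorProduct.comm k B B).toLinearMap ∘ₗ Coalgebra.comul := by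
    have key : LinearMap.mul' k (B ⊗[k] A) ∘ₗ TensorProduct.map (ιA ∘ₗ φinv) (ιB ∘ₗ S) =
        TensorProduct.map S φinv ∘ₗ (TensorProduct.comm k B B).toLinearMap :=
      TensorProduct.ext' fun x y => by
        simp [hιA, hιB, Algebra.TensorProduct.tmul_mul_tmul]
    rw [conv, ← LinearMap.comp_assoc, key, LinearMap.comp_assoc]
  -- convolution identities
  have c1 : conv (ιB ∘ₗ S) (ιB ∘ₗ LinearMap.id) = cunit := by
    rw [comp_conv ιB h_mB]
    have : conv S (LinearMap.id : B →ₗ[k] B) = cunit := by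
      rw [conv, cunit]
      have : TensorProduct.map S (LinearMap.id : B →ₗ[k] B) = S.rTensor B := rfl
      rw [this, hS]
      exact HopfAlgebra.mul_antipode_rTensor_comul
    rw [this]
    exact comp_cunit ιB h_1B
  have c2 : conv (ιA ∘ₗ φinv) (ιA ∘ₗ φ) = cunit := by
    rw [comp_conv ιA h_mA]
    have : conv φinv φ = cunit := hφinv₂
    rw [this]
    exact comp_cunit ιA h_1A
  have c3 : conv (F ∘ₗ φ) (F ∘ₗ φinv) = cunit := by
    rw [comp_conv F h_mF]
    have : conv φ φinv = cunit := hφinv₁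
    rw [this]
    exact comp_cunit F h_1F
  -- the two one-sided inverses
  have hL : F ∘ₗ φ = conv ιB (ιA ∘ₗ φ) := by rw [dL]; exact hsec
  have claimA : conv (conv (ιA ∘ₗ φinv) (ιB ∘ₗ S)) (conv ιB (ιA ∘ₗ φ)) = cunit := by
    rw [conv_assoc, ← conv_assoc (ιB ∘ₗ S) ιB (ιA ∘ₗ φ)]
    have : conv (ιB ∘ₗ S) ιB = cunit := by
      have := c1; rwa [LinearMap.comp_id] at this
    rw [this, cunit_conv, c2]
  have claimB : conv (conv ιB (ιA ∘ₗ φ)) (F ∘ₗ φinv) = cunit := by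
    rw [← hL]; exact c3
  calc F ∘ₗ φinv = conv cunit (F ∘ₗ φinv) := (cunit_conv _).symm
    _ = conv (conv (conv (ιA ∘ₗ φinv) (ιB ∘ₗ S)) (conv ιB (ιA ∘ₗ φ))) (F ∘ₗ φinv) := by
        rw [claimA]
    _ = conv (conv (ιA ∘ₗ φinv) (ιB ∘ₗ S)) (conv (conv ιB (ιA ∘ₗ φ)) (F ∘ₗ φinv)) :=
        conv_assoc _ _ _
    _ = conv (conv (ιA ∘ₗ φinv) (ιB ∘ₗ S)) cunit := by rw [claimB]
    _ = conv (ιA ∘ₗ φinv) (ιB ∘ₗ S) := conv_cunit _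
    _ = TensorProduct.map S φinv ∘ₗ (TensorProduct.comm k B B).toLinearMap ∘ₗ Coalgebra.comul :=
        dR
end

section
/- Let A be a Hopf algebra, π : A → B a surjective Hopf algebra morphism, and φ : B → A a left section (convolution-invertible, φ(1)=1, Σ π(φ(b)_(1)) ⊗ φ(b)_(2) = Σ b_(1) ⊗ φ(b_(2))). Let B_K = { f ∈ A | (π ⊗ id)Δ_A f = 1 ⊗ f }. Then for every f ∈ A the element Σ φ⁻¹(π(f_(1))) f_(2) lies in B_K, and the linear map A_φ : B ⊗ B_K → A, k ⊗ b ↦ φ(k)b, is a linear isomorphism with inverse f ↦ Σ π(f_(1)) ⊗ φ⁻¹(π(f_(2))) f_(3). -/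
open TensorProduct LinearMap


open Coalgebra

namespace TrivSection

variable {k : Type*} [CommSemiring k]
variable {C : Type*} [AddCommMonoid C] [Module k C] [Coalgebra k C]
variable {D : Type*} [Semiring D] [Algebra k D]

/-- Convolution product. -/
noncomputable def conv (f g : C →ₗ[k] D) : C →ₗ[k] D :=
  LinearMap.mul' k D ∘ₗ TensorProduct.map f g ∘ₗ Coalgebra.comul

/-- Convolution unit. -/
noncomputable def cunit : C →ₗ[k] D := Algebra.linearMap k D ∘ₗ Coalgebra.counit

lemma conv_apply_repr (f g : C →ₗ[k] D) {a : C} {ι : Type*} (r : Coalgebra.Repr k a ι) :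
    conv f g a = ∑ i ∈ r.index, f (r.left i) * g (r.right i) := by
  simp [conv, ← r.eq, map_sum]

lemma sum_counit_smul (a : C) {ι : Type*} (r : Coalgebra.Repr k a ι) :
    ∑ i ∈ r.index, counit (R := k) (r.left i) • r.right i = a := by
  have h := congrArg (TensorProduct.lid k C) (sum_counit_tmul_eq r)
  simp only [map_sum, TensorProduct.lid_tmul, one_smul] at h
  exact h

lemma sum_smul_counit (a : C) {ι : Type*} (r : Coalgebra.Repr k a ι) :
    ∑ i ∈ r.index, counit (R := k) (r.right i) • r.left i = a := by
  have h := congrArg (TensorProduct.rid k C) (sum_tmul_counit_eq r)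
  simp only [map_sum, TensorProduct.rid_tmul, one_smul] at h
  exact h

lemma one_conv (f : C →ₗ[k] D) : conv cunit f = f := by
  ext a
  rw [conv_apply_repr _ _ (ℛ k a)]
  have h := sum_counit_smul a (ℛ k a)
  calc ∑ i ∈ (ℛ k a).index, cunit ((ℛ k a).left i) * f ((ℛ k a).right i)
      = ∑ i ∈ (ℛ k a).index, f (counit (R := k) ((ℛ k a).left i) • (ℛ k a).right i) := by
        simp [cunit, Algebra.smul_def]
    _ = f a := by rw [← map_sum, h]

lemma conv_one (f : C →ₗ[k] D) : conv f cunit = f := by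
  ext a
  rw [conv_apply_repr _ _ (ℛ k a)]
  have h := sum_smul_counit a (ℛ k a)
  calc ∑ i ∈ (ℛ k a).index, f ((ℛ k a).left i) * cunit ((ℛ k a).right i)
      = ∑ i ∈ (ℛ k a).index, f (counit (R := k) ((ℛ k a).right i) • (ℛ k a).left i) := by
        simp only [cunit, comp_apply, Algebra.linearMap_apply, map_smul]
        refine Finset.sum_congr rfl fun i _ => ?_
        rw [Algebra.smul_def, Algebra.commutes]
    _ = f a := by rw [← map_sum, h]

lemma conv_assoc (f g h : C →ₗ[k] D) : conv (conv f g) h = conv f (conv g h) := by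
  ext a
  set r := ℛ k a with hr
  set r₁ : ∀ i, Coalgebra.Repr k (r.left i) (C × C) := fun i => ℛ k _ with hr₁
  set r₂ : ∀ i, Coalgebra.Repr k (r.right i) (C × C) := fun i => ℛ k _ with hr₂
  have key := Coalgebra.sum_map_tmul_tmul_eq (f : C →ₗ[k] D) g h a (repr := r)
    (a₁ := r₁) (a₂ := r₂)
  have key2 := congrArg (fun z => (LinearMap.mul' k D) ((LinearMap.lTensor D (LinearMap.mul' k D)) z)) key
  simp only [map_sum, lTensor_tmul, mul'_apply] at key2
  have lhs : conv (conv f g) h a =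
      ∑ i ∈ r.index, ∑ j ∈ (r₁ i).index,
        f ((r₁ i).left j) * (g ((r₁ i).right j) * h (r.right i)) := by
    rw [conv_apply_repr _ _ r]
    refine Finset.sum_congr rfl fun i _ => ?_
    rw [conv_apply_repr _ _ (r₁ i), Finset.sum_mul]
    exact Finset.sum_congr rfl fun j _ => (mul_assoc _ _ _)
  have rhs : conv f (conv g h) a =
      ∑ i ∈ r.index, ∑ j ∈ (r₂ i).index,
        f (r.left i) * (g ((r₂ i).left j) * h ((r₂ i).right j)) := by
    rw [conv_apply_repr _ _ r]
    refine Finset.sum_congr rfl fun i _ => ?_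
    rw [conv_apply_repr _ _ (r₂ i), Finset.mul_sum]
  rw [lhs, rhs, ← key2]

lemma conv_eq_of (f g h : C →ₗ[k] D) (h1 : conv f g = cunit) (h2 : conv h f = cunit) :
    g = h := by
  have := conv_assoc h f g
  rw [h2, h1, one_conv, conv_one] at this
  exact this

lemma comp_conv {E : Type*} [Semiring E] [Algebra k E] (ρ : D →ₗ[k] E)
    (hm : ∀ x y, ρ (x * y) = ρ x * ρ y) (f g : C →ₗ[k] D) :
    ρ ∘ₗ conv f g = conv (ρ ∘ₗ f) (ρ ∘ₗ g) := by
  ext a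
  rw [comp_apply, conv_apply_repr _ _ (ℛ k a), conv_apply_repr _ _ (ℛ k a)]
  simp [map_sum, hm]

lemma comp_cunit {E : Type*} [Semiring E] [Algebra k E] (ρ : D →ₗ[k] E) (h1 : ρ 1 = 1) :
    ρ ∘ₗ (cunit : C →ₗ[k] D) = cunit := by
  ext a
  simp [cunit, Algebra.algebraMap_eq_smul_one, map_smul, h1]

lemma conv_comp {C' : Type*} [AddCommMonoid C'] [Module k C'] [Coalgebra k C']
    (p : C' →ₗ[k] C) (hp : Coalgebra.comul ∘ₗ p = TensorProduct.map p p ∘ₗ Coalgebra.comul)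
    (f g : C →ₗ[k] D) : conv f g ∘ₗ p = conv (f ∘ₗ p) (g ∘ₗ p) := by
  unfold conv
  rw [LinearMap.comp_assoc, LinearMap.comp_assoc, hp, TensorProduct.map_comp]
  rfl

lemma cunit_comp {C' : Type*} [AddCommMonoid C'] [Module k C'] [Coalgebra k C']
    (p : C' →ₗ[k] C) (hp : (Coalgebra.counit : C →ₗ[k] k) ∘ₗ p = Coalgebra.counit) :
    (cunit : C →ₗ[k] D) ∘ₗ p = cunit := by
  unfold cunit
  rw [LinearMap.comp_assoc, hp]

end TrivSection


/-- If the surjective Hopf algebra morphism `π : A → B` has a left section `φ`,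
then for every `f ∈ A` the element `Σ φ⁻¹(π(f₁)) f₂` lies in
`B_K = {f | (π ⊗ id)Δ_A f = 1 ⊗ f}`, and the map
`A_φ : B ⊗ B_K → A, k ⊗ b ↦ φ(k)b` is a linear isomorphism with inverse
`f ↦ Σ π(f₁) ⊗ φ⁻¹(π(f₂)) f₃`.  (So `A ≅ B ⊗ B_K` as vector spaces.) -/
theorem trivialization_of_section
    {k A B : Type*} [Field k] [Ring A] [HopfAlgebra k A]
    [Ring B] [HopfAlgebra k B]
    (π : A →ₗ[k] B) (hsurj : Function.Surjective π)
    (hπone : π 1 = 1) (hπmul : ∀ a b : A, π (a * b) = π a * π b)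
    (hπΔ : Coalgebra.comul ∘ₗ π = TensorProduct.map π π ∘ₗ Coalgebra.comul)
    (hπε : (Coalgebra.counit : B →ₗ[k] k) ∘ₗ π = (Coalgebra.counit : A →ₗ[k] k))
    (φ φinv : B →ₗ[k] A)
    (hφinv₁ : LinearMap.mul' k A ∘ₗ TensorProduct.map φ φinv ∘ₗ Coalgebra.comul =
      Algebra.linearMap k A ∘ₗ (Coalgebra.counit : B →ₗ[k] k))
    (hφinv₂ : LinearMap.mul' k A ∘ₗ TensorProduct.map φinv φ ∘ₗ Coalgebra.comul =
      Algebra.linearMap k A ∘ₗ (Coalgebra.counit : B →ₗ[k] k))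
    (hφone : φ 1 = 1)
    (hsec : (LinearMap.rTensor A π ∘ₗ Coalgebra.comul) ∘ₗ φ =
      LinearMap.lTensor B φ ∘ₗ Coalgebra.comul) :
    let L : A →ₗ[k] B ⊗[k] A := LinearMap.rTensor A π ∘ₗ Coalgebra.comul
    let BK : Submodule k A := LinearMap.ker (L - TensorProduct.mk k B A 1)
    -- `f ↦ Σ φ⁻¹(π(f₁)) f₂`
    let P : A →ₗ[k] A := LinearMap.mul' k A ∘ₗ
      TensorProduct.map (φinv ∘ₗ π) LinearMap.id ∘ₗ Coalgebra.comul
    -- `A_φ : B ⊗ B_K → A, k ⊗ b ↦ φ(k)b`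
    let Aφ : B ⊗[k] BK →ₗ[k] A := LinearMap.mul' k A ∘ₗ TensorProduct.map φ BK.subtype
    -- `f ↦ Σ π(f₁) ⊗ φ⁻¹(π(f₂)) f₃`, as a map into `B ⊗ A`
    let Inv : A →ₗ[k] B ⊗[k] A := TensorProduct.map π P ∘ₗ Coalgebra.comul
    (∀ f : A, P f ∈ BK) ∧
    Function.Bijective Aφ ∧
    (∀ x : B ⊗[k] BK, Inv (Aφ x) = LinearMap.lTensor B BK.subtype x) ∧
    (∀ f : A, (LinearMap.mul' k A ∘ₗ TensorProduct.map φ LinearMap.id) (Inv f) = f) := by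
  intro L BK P Aφ Inv
  have hL : L = LinearMap.rTensor A π ∘ₗ Coalgebra.comul := rfl
  have hP : P = TrivSection.conv (φinv ∘ₗ π) LinearMap.id := rfl
  have hAφ : Aφ = LinearMap.mul' k A ∘ₗ TensorProduct.map φ BK.subtype := rfl
  have hInv : Inv = TensorProduct.map π P ∘ₗ Coalgebra.comul := rfl
  have h1 : TrivSection.conv φ φinv = (TrivSection.cunit : B →ₗ[k] A) := hφinv₁
  have h2 : TrivSection.conv φinv φ = (TrivSection.cunit : B →ₗ[k] A) := hφinv₂
  -- L is multiplicative
  let πA : A →ₐ[k] B := AlgHom.ofLinearMap π hπone hπmul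
  have hmapL : (Algebra.TensorProduct.map πA (AlgHom.id k A)).toLinearMap
      = LinearMap.rTensor A π := TensorProduct.ext' fun x y => by
    simp [πA]
  let ρA : A →ₐ[k] B ⊗[k] A :=
    (Algebra.TensorProduct.map πA (AlgHom.id k A)).comp (Bialgebra.comulAlgHom k A)
  have hLρ : ∀ x, L x = ρA x := fun x => by
    rw [hL]
    simp only [ρA, LinearMap.comp_apply, AlgHom.comp_apply, Bialgebra.comulAlgHom_apply]
    exact (LinearMap.congr_fun hmapL (Coalgebra.comul x)).symm
  have hLmul : ∀ x y : A, L (x * y) = L x * L y := fun x y => by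
    rw [hLρ, hLρ, hLρ, map_mul]
  have hLone : L 1 = 1 := by rw [hLρ, map_one]
  -- inclusion maps
  let ιL : B →ₗ[k] B ⊗[k] A :=
    (Algebra.TensorProduct.includeLeft : B →ₐ[k] B ⊗[k] A).toLinearMap
  let ιR : A →ₗ[k] B ⊗[k] A :=
    (Algebra.TensorProduct.includeRight : A →ₐ[k] B ⊗[k] A).toLinearMap
  have hιLmul : ∀ x y, ιL (x * y) = ιL x * ιL y := fun x y =>
    map_mul (Algebra.TensorProduct.includeLeft : B →ₐ[k] B ⊗[k] A) x y
  have hιRmul : ∀ x y, ιR (x * y) = ιR x * ιR y := fun x y =>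
    map_mul (Algebra.TensorProduct.includeRight : A →ₐ[k] B ⊗[k] A) x y
  have hιLone : ιL 1 = 1 := map_one (Algebra.TensorProduct.includeLeft : B →ₐ[k] B ⊗[k] A)
  have hιRone : ιR 1 = 1 := map_one (Algebra.TensorProduct.includeRight : A →ₐ[k] B ⊗[k] A)
  have hSconv : TrivSection.conv (HopfAlgebra.antipode (R := k)) (LinearMap.id : B →ₗ[k] B)
      = TrivSection.cunit := HopfAlgebra.mul_antipode_rTensor_comul
  -- L as a convolution
  have hfact1 : LinearMap.mul' k (B ⊗[k] A) ∘ₗ TensorProduct.map (ιL ∘ₗ π) ιR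
      = LinearMap.rTensor A π := TensorProduct.ext' fun x y => by
    simp [ιL, ιR, Algebra.TensorProduct.tmul_mul_tmul]
  have hLconv : L = TrivSection.conv (ιL ∘ₗ π) ιR := by
    rw [hL, TrivSection.conv, ← LinearMap.comp_assoc, hfact1]
  have hfact2 : LinearMap.mul' k (B ⊗[k] A) ∘ₗ TensorProduct.map ιL (ιR ∘ₗ φ)
      = LinearMap.lTensor B φ := TensorProduct.ext' fun x y => by
    simp [ιL, ιR, Algebra.TensorProduct.tmul_mul_tmul]
  have hρφ : L ∘ₗ φ = TrivSection.conv ιL (ιR ∘ₗ φ) := by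
    rw [hL, hsec, TrivSection.conv, ← LinearMap.comp_assoc, hfact2]
  -- conv (ιL ∘ S) ιL = cunit
  have e1 : TrivSection.conv (ιL ∘ₗ HopfAlgebra.antipode (R := k)) ιL
      = TrivSection.cunit := by
    have h' := TrivSection.comp_conv ιL hιLmul (HopfAlgebra.antipode (R := k)) LinearMap.id
    rw [hSconv, LinearMap.comp_id] at h'
    rw [← h']
    exact TrivSection.comp_cunit ιL hιLone
  -- ρ ∘ φinv formula
  have hρφinv : L ∘ₗ φinv
      = TrivSection.conv (ιR ∘ₗ φinv) (ιL ∘ₗ HopfAlgebra.antipode (R := k)) := by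
    apply TrivSection.conv_eq_of (L ∘ₗ φ)
    · have h' := TrivSection.comp_conv L hLmul φ φinv
      rw [h1] at h'
      rw [← h']
      exact TrivSection.comp_cunit L hLone
    · rw [hρφ, TrivSection.conv_assoc,
        ← TrivSection.conv_assoc (ιL ∘ₗ HopfAlgebra.antipode (R := k)) ιL (ιR ∘ₗ φ),
        e1, TrivSection.one_conv]
      have h'' := TrivSection.comp_conv ιR hιRmul φinv φ
      rw [h2] at h''
      rw [← h'']
      exact TrivSection.comp_cunit ιR hιRone
  -- statement 1 : L ∘ P = ιR ∘ P
  have e2 : TrivSection.conv ((ιL ∘ₗ HopfAlgebra.antipode (R := k)) ∘ₗ π) (ιL ∘ₗ π)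
      = TrivSection.cunit := by
    rw [← TrivSection.conv_comp π hπΔ, e1]
    exact TrivSection.cunit_comp π hπε
  have hLP : L ∘ₗ P = ιR ∘ₗ P := by
    have step1 : L ∘ₗ P = TrivSection.conv (L ∘ₗ (φinv ∘ₗ π)) L := by
      rw [hP, TrivSection.comp_conv L hLmul (φinv ∘ₗ π) LinearMap.id, LinearMap.comp_id]
    rw [step1, ← LinearMap.comp_assoc, hρφinv, TrivSection.conv_comp π hπΔ]
    conv_lhs => rw [hLconv]
    rw [TrivSection.conv_assoc,
      ← TrivSection.conv_assoc ((ιL ∘ₗ HopfAlgebra.antipode (R := k)) ∘ₗ π) (ιL ∘ₗ π) ιR,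
      e2, TrivSection.one_conv]
    rw [hP, TrivSection.comp_conv ιR hιRmul (φinv ∘ₗ π) LinearMap.id, LinearMap.comp_id,
      ← LinearMap.comp_assoc]
  have mem1 : ∀ f : A, P f ∈ BK := by
    intro f
    have hx := LinearMap.congr_fun hLP f
    simp only [LinearMap.comp_apply] at hx
    show (L - TensorProduct.mk k B A 1) (P f) = 0
    rw [LinearMap.sub_apply, hx, sub_eq_zero]
    simp [ιR]
  -- main convolution identity
  have hmain : TrivSection.conv (φ ∘ₗ π) P = LinearMap.id := by
    rw [hP, ← TrivSection.conv_assoc]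
    have hcc : TrivSection.conv (φ ∘ₗ π) (φinv ∘ₗ π) = TrivSection.cunit := by
      rw [← TrivSection.conv_comp π hπΔ, h1]
      exact TrivSection.cunit_comp π hπε
    rw [hcc, TrivSection.one_conv]
  -- statement 4
  have st4 : ∀ f : A, (LinearMap.mul' k A ∘ₗ TensorProduct.map φ LinearMap.id) (Inv f) = f := by
    intro f
    have hmc : TensorProduct.map φ LinearMap.id ∘ₗ TensorProduct.map π P
        = TensorProduct.map (φ ∘ₗ π) P := by
      rw [← TensorProduct.map_comp, LinearMap.id_comp]
    have hcomp : (LinearMap.mul' k A ∘ₗ TensorProduct.map φ LinearMap.id) ∘ₗ Inv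
        = TrivSection.conv (φ ∘ₗ π) P := by
      rw [hInv, TrivSection.conv, ← hmc]
      simp only [LinearMap.comp_assoc]
    have := LinearMap.congr_fun (hcomp.trans hmain) f
    simpa using this
  -- P through L
  have hmapfact : TensorProduct.map φinv LinearMap.id ∘ₗ LinearMap.rTensor A π
      = TensorProduct.map (φinv ∘ₗ π) LinearMap.id := TensorProduct.ext' fun x y => by simp
  have hPQ : P = (LinearMap.mul' k A ∘ₗ TensorProduct.map φinv LinearMap.id) ∘ₗ L := by
    rw [hP, TrivSection.conv, hL, ← hmapfact]
    simp only [LinearMap.comp_assoc]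
  have hInvL : Inv = LinearMap.lTensor B P ∘ₗ L := by
    rw [hInv, hL, ← LinearMap.comp_assoc, LinearMap.lTensor_comp_rTensor]
  -- key lemma for statement 3
  have key3 : ∀ b : A, L b = (1 : B) ⊗ₜ[k] b →
      ∀ x : B, P (φ x * b) = Coalgebra.counit (R := k) x • b := by
    intro b hb x
    have hLφ : L (φ x) = LinearMap.lTensor B φ (Coalgebra.comul x) := by
      simpa [hL] using LinearMap.congr_fun hsec x
    rw [hPQ]
    simp only [LinearMap.comp_apply]
    rw [hLmul, hb, hLφ, ← (ℛ k x).eq]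
    simp only [map_sum, LinearMap.lTensor_tmul, Finset.sum_mul,
      Algebra.TensorProduct.tmul_mul_tmul, mul_one, TensorProduct.map_tmul,
      LinearMap.mul'_apply, LinearMap.id_coe, id_eq]
    have hstep : ∑ i ∈ (ℛ k x).index, φinv ((ℛ k x).left i) * (φ ((ℛ k x).right i) * b)
        = (∑ i ∈ (ℛ k x).index, φinv ((ℛ k x).left i) * φ ((ℛ k x).right i)) * b := by
      rw [Finset.sum_mul]
      exact Finset.sum_congr rfl fun i _ => (mul_assoc _ _ _).symm
    rw [hstep, ← TrivSection.conv_apply_repr φinv φ (ℛ k x), h2]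
    simp [TrivSection.cunit, Algebra.smul_def]
  -- statement 3
  have st3 : ∀ x : B ⊗[k] BK, Inv (Aφ x) = LinearMap.lTensor B BK.subtype x := by
    have heq : Inv ∘ₗ Aφ = LinearMap.lTensor B BK.subtype := by
      apply TensorProduct.ext'
      intro c b
      have hb : L (b : A) = (1 : B) ⊗ₜ[k] (b : A) := by
        have hm := LinearMap.mem_ker.mp b.2
        rw [LinearMap.sub_apply, sub_eq_zero] at hm
        exact hm
      have hAφapp : Aφ (c ⊗ₜ[k] b) = φ c * (b : A) := by
        simp [hAφ]
      have hLφ : L (φ c) = LinearMap.lTensor B φ (Coalgebra.comul c) := by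
        simpa [hL] using LinearMap.congr_fun hsec c
      rw [LinearMap.comp_apply, hAφapp, hInvL, LinearMap.comp_apply, hLmul, hb, hLφ,
        ← (ℛ k c).eq]
      simp only [map_sum, LinearMap.lTensor_tmul, Finset.sum_mul,
        Algebra.TensorProduct.tmul_mul_tmul, mul_one]
      have hterm : ∀ i ∈ (ℛ k c).index,
          (ℛ k c).left i ⊗ₜ[k] P (φ ((ℛ k c).right i) * (b : A))
          = (Coalgebra.counit (R := k) ((ℛ k c).right i) • (ℛ k c).left i) ⊗ₜ[k] (b : A) := by
        intro i _
        rw [key3 _ hb, TensorProduct.tmul_smul, TensorProduct.smul_tmul']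
      rw [Finset.sum_congr rfl hterm, ← TensorProduct.sum_tmul,
        TrivSection.sum_smul_counit c (ℛ k c)]
      simp
    intro x
    exact LinearMap.congr_fun heq x
  -- bijectivity
  have hinj : Function.Injective Aφ := by
    have hsub : Function.Injective (LinearMap.lTensor B BK.subtype) :=
      Module.Flat.lTensor_preserves_injective_linearMap _ BK.injective_subtype
    intro x y hxy
    apply hsub
    rw [← st3 x, ← st3 y, hxy]
  have hsur : Function.Surjective Aφ := by
    intro f
    refine ⟨TensorProduct.map π (LinearMap.codRestrict BK P mem1) (Coalgebra.comul f), ?_⟩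
    have hmc : TensorProduct.map φ BK.subtype ∘ₗ TensorProduct.map π (LinearMap.codRestrict BK P mem1)
        = TensorProduct.map (φ ∘ₗ π) P := by
      rw [← TensorProduct.map_comp, LinearMap.subtype_comp_codRestrict]
    have hcomp : Aφ ∘ₗ (TensorProduct.map π (LinearMap.codRestrict BK P mem1) ∘ₗ Coalgebra.comul)
        = TrivSection.conv (φ ∘ₗ π) P := by
      rw [hAφ, TrivSection.conv, ← hmc]
      simp only [LinearMap.comp_assoc]
    have := LinearMap.congr_fun (hcomp.trans hmain) f
    simpa using this
  exact ⟨mem1, ⟨hinj, hsur⟩, st3, st4⟩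
end

section
/- Let A be a Hopf algebra, π : A → B a surjective Hopf algebra morphism with a left section φ : B → A, (V, ρ_R) a right B-comodule, H_R = { F ∈ V ⊗ A | (id ⊗ L)F = (ρ_R ⊗ id)F } the induced space (L = (π ⊗ id)Δ_A), and B_K = { f ∈ A | (π ⊗ id)Δ_A f = 1 ⊗ f }. Then the map T_φ : V → V ⊗ A, v ↦ Σ v_(0) ⊗ φ(v_(1)) (Sweedler notation ρ_R(v)=Σ v_(0) ⊗ v_(1)) takes values in H_R, and the linear map I_φ : V ⊗ B_K → H_R, v ⊗ b ↦ T_φ(v)·b = Σ v_(0) ⊗ φ(v_(1))b, is a bijection with inverse v ⊗ f ↦ Σ v ⊗ φ⁻¹(π(f_(1))) f_(2); in particular H_R ≅ V ⊗ B_K as right B_K-modules. -/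
open TensorProduct LinearMap
open Coalgebra

section aux
variable {k C : Type*} [CommSemiring k] [AddCommMonoid C] [Module k C] [Coalgebra k C]

lemma sw4 (a : C) (r : Coalgebra.Repr k a (C × C))
    (r₁ : ∀ i : r.ι, Coalgebra.Repr k (r.left i) (C × C))
    (r₂ : ∀ i : r.ι, Coalgebra.Repr k (r.right i) (C × C))
    (r₂₁ : ∀ (i : r.ι) (m : (r₂ i).ι), Coalgebra.Repr k ((r₂ i).left m) (C × C)) :
    ∑ i ∈ r.index, ∑ j ∈ (r₁ i).index, ∑ m ∈ (r₂ i).index,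
      (r₁ i).left j ⊗ₜ[k] ((r₁ i).right j ⊗ₜ[k] ((r₂ i).left m ⊗ₜ[k] (r₂ i).right m))
    = ∑ i ∈ r.index, ∑ m ∈ (r₂ i).index, ∑ j ∈ (r₂₁ i m).index,
      r.left i ⊗ₜ[k] ((r₂₁ i m).left j ⊗ₜ[k] ((r₂₁ i m).right j ⊗ₜ[k] (r₂ i).right m)) := by
  classical
  have h1 := Coalgebra.sum_tmul_tmul_eq (R := k) r r₁ r₂
  apply_fun LinearMap.lTensor C (LinearMap.lTensor C (Coalgebra.comul (R := k))) at h1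
  simp only [map_sum, LinearMap.lTensor_tmul] at h1
  calc ∑ i ∈ r.index, ∑ j ∈ (r₁ i).index, ∑ m ∈ (r₂ i).index,
        (r₁ i).left j ⊗ₜ[k] ((r₁ i).right j ⊗ₜ[k] ((r₂ i).left m ⊗ₜ[k] (r₂ i).right m))
      = ∑ i ∈ r.index, ∑ j ∈ (r₁ i).index,
        (r₁ i).left j ⊗ₜ[k] ((r₁ i).right j ⊗ₜ[k] Coalgebra.comul (r.right i)) := by
        refine Finset.sum_congr rfl fun i _ => Finset.sum_congr rfl fun j _ => ?_
        rw [← (r₂ i).eq, tmul_sum, tmul_sum]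
    _ = ∑ i ∈ r.index, ∑ m ∈ (r₂ i).index,
        r.left i ⊗ₜ[k] ((r₂ i).left m ⊗ₜ[k] Coalgebra.comul ((r₂ i).right m)) := h1
    _ = ∑ i ∈ r.index, ∑ m ∈ (r₂ i).index, ∑ j ∈ (r₂₁ i m).index,
        r.left i ⊗ₜ[k] ((r₂₁ i m).left j ⊗ₜ[k] ((r₂₁ i m).right j ⊗ₜ[k] (r₂ i).right m)) := by
        refine Finset.sum_congr rfl fun i _ => ?_
        have h3 := Coalgebra.sum_tmul_tmul_eq (R := k) (r₂ i) (r₂₁ i)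
          (fun m => ℛ k ((r₂ i).right m))
        apply_fun (TensorProduct.mk k C _ (r.left i)) at h3
        simp only [map_sum, mk_apply] at h3
        rw [h3]
        refine Finset.sum_congr rfl fun m _ => ?_
        rw [← (ℛ k ((r₂ i).right m)).eq, tmul_sum, tmul_sum]

variable {D : Type*} [Semiring D] [Algebra k D]

/-- Pointwise form of a convolution identity. -/
lemma conv_repr (f g : C →ₗ[k] D)
    (h : LinearMap.mul' k D ∘ₗ TensorProduct.map f g ∘ₗ Coalgebra.comul =
      Algebra.linearMap k D ∘ₗ (Coalgebra.counit : C →ₗ[k] k))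
    (c : C) (r : Coalgebra.Repr k c (C × C)) :
    ∑ i ∈ r.index, f (r.left i) * g (r.right i)
      = algebraMap k D (Coalgebra.counit c) := by
  have := LinearMap.congr_fun h c
  simp only [LinearMap.comp_apply, Algebra.linearMap_apply] at this
  rw [← r.eq] at this
  simpa [map_sum] using this

/-- Three-fold Sweedler regrouping applied to products of three maps. -/
lemma sw3_mul (F G H : C →ₗ[k] D) (c : C) (r : Coalgebra.Repr k c (C × C))
    (r₁ : ∀ i : r.ι, Coalgebra.Repr k (r.left i) (C × C))
    (r₂ : ∀ i : r.ι, Coalgebra.Repr k (r.right i) (C × C)) :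
    ∑ i ∈ r.index, ∑ j ∈ (r₁ i).index,
      F ((r₁ i).left j) * G ((r₁ i).right j) * H (r.right i)
    = ∑ i ∈ r.index, ∑ m ∈ (r₂ i).index,
      F (r.left i) * G ((r₂ i).left m) * H ((r₂ i).right m) := by
  have h1 := Coalgebra.sum_tmul_tmul_eq (R := k) r r₁ r₂
  apply_fun (LinearMap.mul' k D ∘ₗ TensorProduct.map F
    (LinearMap.mul' k D ∘ₗ TensorProduct.map G H)) at h1
  simpa [map_sum, LinearMap.mul'_apply, mul_assoc] using h1

lemma counit_smul_right (c : C) (r : Coalgebra.Repr k c (C × C)) :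
    ∑ i ∈ r.index, Coalgebra.counit (R := k) (r.left i) • r.right i = c := by
  have := Coalgebra.sum_counit_tmul_eq (R := k) r
  apply_fun (TensorProduct.lid k C) at this
  simp only [map_sum, TensorProduct.lid_tmul, one_smul] at this
  exact this

lemma counit_smul_left (c : C) (r : Coalgebra.Repr k c (C × C)) :
    ∑ i ∈ r.index, Coalgebra.counit (R := k) (r.right i) • r.left i = c := by
  have := Coalgebra.sum_tmul_counit_eq (R := k) r
  apply_fun (TensorProduct.rid k C) at this
  simp only [map_sum, TensorProduct.rid_tmul, one_smul] at this
  exact this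

end aux

section hopfaux
variable {k A B : Type*} [CommSemiring k] [Ring A] [HopfAlgebra k A] [Ring B] [HopfAlgebra k B]
variable (π : A →ₗ[k] B) (φ φinv : B →ₗ[k] A)

/-- The candidate for `L ∘ φ⁻¹`: `b ↦ Σ S(b₂) ⊗ φ⁻¹(b₁)`. -/
noncomputable def auxH : B →ₗ[k] B ⊗[k] A :=
  TensorProduct.map (HopfAlgebra.antipode (R := k)) φinv ∘ₗ
    (TensorProduct.comm k B B).toLinearMap ∘ₗ Coalgebra.comul

lemma auxH_repr (b : B) (r : Coalgebra.Repr k b (B × B)) :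
    auxH φinv b
      = ∑ i ∈ r.index, HopfAlgebra.antipode (R := k) (r.right i) ⊗ₜ[k] φinv (r.left i) := by
  simp only [auxH, LinearMap.comp_apply, LinearEquiv.coe_coe]
  rw [← r.eq]
  simp [map_sum]

lemma LL_repr (a : A) (r : Coalgebra.Repr k a (A × A)) :
    LinearMap.rTensor A π (Coalgebra.comul a)
      = ∑ i ∈ r.index, π (r.left i) ⊗ₜ[k] r.right i := by
  rw [← r.eq]; simp [map_sum]

lemma Lφ_repr (hsec : (LinearMap.rTensor A π ∘ₗ Coalgebra.comul) ∘ₗ φ =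
      LinearMap.lTensor B φ ∘ₗ Coalgebra.comul) (b : B) (r : Coalgebra.Repr k b (B × B)) :
    LinearMap.rTensor A π (Coalgebra.comul (φ b))
      = ∑ i ∈ r.index, r.left i ⊗ₜ[k] φ (r.right i) := by
  have := LinearMap.congr_fun hsec b
  simp only [LinearMap.comp_apply] at this
  rw [this, ← r.eq]
  simp [map_sum]

lemma auxH_π_repr (hπΔ : Coalgebra.comul ∘ₗ π = TensorProduct.map π π ∘ₗ Coalgebra.comul)
    (a : A) (r : Coalgebra.Repr k a (A × A)) :
    auxH φinv (π a)
      = ∑ i ∈ r.index,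
          HopfAlgebra.antipode (R := k) (π (r.right i)) ⊗ₜ[k] φinv (π (r.left i)) := by
  have hc : Coalgebra.comul (R := k) (π a) = TensorProduct.map π π (Coalgebra.comul a) :=
    LinearMap.congr_fun hπΔ a
  simp only [auxH, LinearMap.comp_apply, LinearEquiv.coe_coe]
  rw [hc, ← r.eq]
  simp [map_sum]

lemma conv_auxH_Lφ
    (hsec : (LinearMap.rTensor A π ∘ₗ Coalgebra.comul) ∘ₗ φ =
      LinearMap.lTensor B φ ∘ₗ Coalgebra.comul)
    (hφinv₂ : LinearMap.mul' k A ∘ₗ TensorProduct.map φinv φ ∘ₗ Coalgebra.comul =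
      Algebra.linearMap k A ∘ₗ (Coalgebra.counit : B →ₗ[k] k))
    (b : B) (r : Coalgebra.Repr k b (B × B)) :
    ∑ i ∈ r.index,
        auxH φinv (r.left i) * LinearMap.rTensor A π (Coalgebra.comul (φ (r.right i)))
      = Coalgebra.counit (R := k) b • (1 : B ⊗[k] A) := by
  classical
  have h := sw4 b r (fun i => ℛ k (r.left i)) (fun i => ℛ k (r.right i))
    (fun i m => ℛ k ((ℛ k (r.right i)).left m))
  apply_fun (LinearMap.mul' k (B ⊗[k] A) ∘ₗ
    TensorProduct.map
      (TensorProduct.map (HopfAlgebra.antipode (R := k)) φinv ∘ₗ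
        (TensorProduct.comm k B B).toLinearMap)
      (LinearMap.lTensor B φ) ∘ₗ
    (TensorProduct.assoc k B B (B ⊗[k] B)).symm.toLinearMap) at h
  simp only [map_sum, LinearMap.comp_apply, LinearEquiv.coe_coe,
    TensorProduct.assoc_symm_tmul, TensorProduct.map_tmul, TensorProduct.comm_tmul,
    LinearMap.lTensor_tmul, LinearMap.mul'_apply,
    Algebra.TensorProduct.tmul_mul_tmul] at h
  calc ∑ i ∈ r.index,
        auxH φinv (r.left i) * LinearMap.rTensor A π (Coalgebra.comul (φ (r.right i)))
      = ∑ i ∈ r.index, ∑ j ∈ (ℛ k (r.left i)).index, ∑ m ∈ (ℛ k (r.right i)).index,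
          (HopfAlgebra.antipode (R := k) ((ℛ k (r.left i)).right j) *
            (ℛ k (r.right i)).left m) ⊗ₜ[k]
          (φinv ((ℛ k (r.left i)).left j) * φ ((ℛ k (r.right i)).right m)) := by
        refine Finset.sum_congr rfl fun i _ => ?_
        rw [auxH_repr φinv _ (ℛ k (r.left i)), Lφ_repr π φ hsec _ (ℛ k (r.right i)),
          Finset.sum_mul_sum]
        simp [Algebra.TensorProduct.tmul_mul_tmul]
    _ = ∑ i ∈ r.index, ∑ m ∈ (ℛ k (r.right i)).index,
          ∑ j ∈ (ℛ k ((ℛ k (r.right i)).left m)).index,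
          (HopfAlgebra.antipode (R := k) ((ℛ k ((ℛ k (r.right i)).left m)).left j) *
            (ℛ k ((ℛ k (r.right i)).left m)).right j) ⊗ₜ[k]
          (φinv (r.left i) * φ ((ℛ k (r.right i)).right m)) := h
    _ = ∑ i ∈ r.index, ∑ m ∈ (ℛ k (r.right i)).index,
          Coalgebra.counit (R := k) ((ℛ k (r.right i)).left m) •
            ((1 : B) ⊗ₜ[k] (φinv (r.left i) * φ ((ℛ k (r.right i)).right m))) := by
        refine Finset.sum_congr rfl fun i _ => Finset.sum_congr rfl fun m _ => ?_
        rw [← TensorProduct.sum_tmul, HopfAlgebra.sum_antipode_mul_eq_algebraMap_counit,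
          Algebra.algebraMap_eq_smul_one, TensorProduct.smul_tmul']
    _ = ∑ i ∈ r.index, (1 : B) ⊗ₜ[k] (φinv (r.left i) * φ (r.right i)) := by
        refine Finset.sum_congr rfl fun i _ => ?_
        calc ∑ m ∈ (ℛ k (r.right i)).index,
              Coalgebra.counit (R := k) ((ℛ k (r.right i)).left m) •
                ((1 : B) ⊗ₜ[k] (φinv (r.left i) * φ ((ℛ k (r.right i)).right m)))
            = ∑ m ∈ (ℛ k (r.right i)).index,
              (1 : B) ⊗ₜ[k] (φinv (r.left i) *
                φ (Coalgebra.counit (R := k) ((ℛ k (r.right i)).left m) •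
                  (ℛ k (r.right i)).right m)) := by
              refine Finset.sum_congr rfl fun m _ => ?_
              rw [map_smul, mul_smul_comm, TensorProduct.tmul_smul]
          _ = (1 : B) ⊗ₜ[k] (φinv (r.left i) *
                φ (∑ m ∈ (ℛ k (r.right i)).index,
                  Coalgebra.counit (R := k) ((ℛ k (r.right i)).left m) •
                    (ℛ k (r.right i)).right m)) := by
              rw [map_sum, Finset.mul_sum, TensorProduct.tmul_sum]
          _ = (1 : B) ⊗ₜ[k] (φinv (r.left i) * φ (r.right i)) := by
              rw [counit_smul_right]
    _ = Coalgebra.counit (R := k) b • (1 : B ⊗[k] A) := by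
        rw [← TensorProduct.tmul_sum, conv_repr φinv φ hφinv₂ b r,
          Algebra.algebraMap_eq_smul_one, TensorProduct.tmul_smul,
          ← Algebra.TensorProduct.one_def]

lemma rT_mul (hπmul : ∀ a b : A, π (a * b) = π a * π b) (u w : A ⊗[k] A) :
    LinearMap.rTensor A π (u * w) = LinearMap.rTensor A π u * LinearMap.rTensor A π w := by
  induction u using TensorProduct.induction_on with
  | zero => simp
  | tmul a b =>
    induction w using TensorProduct.induction_on with
    | zero => simp
    | tmul c d => simp [Algebra.TensorProduct.tmul_mul_tmul, hπmul]
    | add x y hx hy => simp only [mul_add, map_add, hx, hy]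
  | add x y hx hy => simp only [add_mul, map_add, hx, hy]

lemma LL_mul (hπmul : ∀ a b : A, π (a * b) = π a * π b) (x y : A) :
    LinearMap.rTensor A π (Coalgebra.comul (x * y))
      = LinearMap.rTensor A π (Coalgebra.comul x) *
        LinearMap.rTensor A π (Coalgebra.comul y) := by
  rw [Bialgebra.comul_mul, rT_mul π hπmul]

lemma LL_one (hπone : π 1 = 1) :
    LinearMap.rTensor A π (Coalgebra.comul (1 : A)) = 1 := by
  rw [Bialgebra.comul_one, Algebra.TensorProduct.one_def]
  simp [hπone, Algebra.TensorProduct.one_def]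

lemma conv_Lφ_Lφinv (hπmul : ∀ a b : A, π (a * b) = π a * π b) (hπone : π 1 = 1)
    (hφinv₁ : LinearMap.mul' k A ∘ₗ TensorProduct.map φ φinv ∘ₗ Coalgebra.comul =
      Algebra.linearMap k A ∘ₗ (Coalgebra.counit : B →ₗ[k] k))
    (c : B) (r : Coalgebra.Repr k c (B × B)) :
    ∑ i ∈ r.index,
        LinearMap.rTensor A π (Coalgebra.comul (φ (r.left i))) *
          LinearMap.rTensor A π (Coalgebra.comul (φinv (r.right i)))
      = Coalgebra.counit (R := k) c • (1 : B ⊗[k] A) := by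
  calc ∑ i ∈ r.index,
        LinearMap.rTensor A π (Coalgebra.comul (φ (r.left i))) *
          LinearMap.rTensor A π (Coalgebra.comul (φinv (r.right i)))
      = ∑ i ∈ r.index,
        LinearMap.rTensor A π (Coalgebra.comul (φ (r.left i) * φinv (r.right i))) := by
        refine Finset.sum_congr rfl fun i _ => ?_
        rw [LL_mul π hπmul]
    _ = LinearMap.rTensor A π (Coalgebra.comul
          (∑ i ∈ r.index, φ (r.left i) * φinv (r.right i))) := by
        rw [map_sum, map_sum]
    _ = Coalgebra.counit (R := k) c • (1 : B ⊗[k] A) := by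
        rw [conv_repr φ φinv hφinv₁ c r, Algebra.algebraMap_eq_smul_one, map_smul, map_smul,
          LL_one π hπone]

lemma key_Lφinv (hπmul : ∀ a b : A, π (a * b) = π a * π b) (hπone : π 1 = 1)
    (hsec : (LinearMap.rTensor A π ∘ₗ Coalgebra.comul) ∘ₗ φ =
      LinearMap.lTensor B φ ∘ₗ Coalgebra.comul)
    (hφinv₁ : LinearMap.mul' k A ∘ₗ TensorProduct.map φ φinv ∘ₗ Coalgebra.comul =
      Algebra.linearMap k A ∘ₗ (Coalgebra.counit : B →ₗ[k] k))
    (hφinv₂ : LinearMap.mul' k A ∘ₗ TensorProduct.map φinv φ ∘ₗ Coalgebra.comul =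
      Algebra.linearMap k A ∘ₗ (Coalgebra.counit : B →ₗ[k] k))
    (b : B) :
    LinearMap.rTensor A π (Coalgebra.comul (φinv b)) = auxH φinv b := by
  classical
  set r := ℛ k b with hr
  have hsw := sw3_mul (auxH φinv)
    ((LinearMap.rTensor A π ∘ₗ Coalgebra.comul) ∘ₗ φ)
    ((LinearMap.rTensor A π ∘ₗ Coalgebra.comul) ∘ₗ φinv) b r
    (fun i => ℛ k (r.left i)) (fun i => ℛ k (r.right i))
  simp only [LinearMap.comp_apply] at hsw
  have step1 : auxH φinv b
      = ∑ i ∈ r.index, ∑ m ∈ (ℛ k (r.right i)).index,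
          auxH φinv (r.left i) *
            (LinearMap.rTensor A π (Coalgebra.comul (φ ((ℛ k (r.right i)).left m))) *
             LinearMap.rTensor A π (Coalgebra.comul (φinv ((ℛ k (r.right i)).right m)))) := by
    calc auxH φinv b
        = auxH φinv (∑ i ∈ r.index, Coalgebra.counit (R := k) (r.right i) • r.left i) := by
          rw [counit_smul_left]
      _ = ∑ i ∈ r.index, auxH φinv (r.left i) *
            (Coalgebra.counit (R := k) (r.right i) • (1 : B ⊗[k] A)) := by
          rw [map_sum]
          refine Finset.sum_congr rfl fun i _ => ?_
          rw [map_smul, mul_smul_comm, mul_one]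
      _ = ∑ i ∈ r.index, auxH φinv (r.left i) *
            (∑ m ∈ (ℛ k (r.right i)).index,
              LinearMap.rTensor A π (Coalgebra.comul (φ ((ℛ k (r.right i)).left m))) *
              LinearMap.rTensor A π (Coalgebra.comul (φinv ((ℛ k (r.right i)).right m)))) := by
          refine Finset.sum_congr rfl fun i _ => ?_
          rw [conv_Lφ_Lφinv π φ φinv hπmul hπone hφinv₁ (r.right i) (ℛ k (r.right i))]
      _ = ∑ i ∈ r.index, ∑ m ∈ (ℛ k (r.right i)).index,
          auxH φinv (r.left i) *
            (LinearMap.rTensor A π (Coalgebra.comul (φ ((ℛ k (r.right i)).left m))) *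
             LinearMap.rTensor A π (Coalgebra.comul (φinv ((ℛ k (r.right i)).right m)))) := by
          refine Finset.sum_congr rfl fun i _ => ?_
          rw [Finset.mul_sum]
  rw [step1]
  simp only [← mul_assoc] at step1 ⊢
  rw [← hsw]
  symm
  calc ∑ i ∈ r.index, ∑ j ∈ (ℛ k (r.left i)).index,
        auxH φinv ((ℛ k (r.left i)).left j) *
          LinearMap.rTensor A π (Coalgebra.comul (φ ((ℛ k (r.left i)).right j))) *
          LinearMap.rTensor A π (Coalgebra.comul (φinv (r.right i)))
      = ∑ i ∈ r.index,
          (Coalgebra.counit (R := k) (r.left i) • (1 : B ⊗[k] A)) *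
            LinearMap.rTensor A π (Coalgebra.comul (φinv (r.right i))) := by
        refine Finset.sum_congr rfl fun i _ => ?_
        rw [← Finset.sum_mul, conv_auxH_Lφ π φ φinv hsec hφinv₂ (r.left i) (ℛ k (r.left i))]
    _ = ∑ i ∈ r.index, Coalgebra.counit (R := k) (r.left i) •
          LinearMap.rTensor A π (Coalgebra.comul (φinv (r.right i))) := by
        refine Finset.sum_congr rfl fun i _ => ?_
        rw [smul_mul_assoc, one_mul]
    _ = LinearMap.rTensor A π (Coalgebra.comul (φinv b)) := by
        calc ∑ i ∈ r.index, Coalgebra.counit (R := k) (r.left i) •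
              LinearMap.rTensor A π (Coalgebra.comul (φinv (r.right i)))
            = LinearMap.rTensor A π (Coalgebra.comul (φinv
                (∑ i ∈ r.index, Coalgebra.counit (R := k) (r.left i) • r.right i))) := by
              rw [map_sum φinv, map_sum, map_sum]
              refine Finset.sum_congr rfl fun i _ => ?_
              rw [map_smul φinv, map_smul, map_smul]
          _ = LinearMap.rTensor A π (Coalgebra.comul (φinv b)) := by
              rw [counit_smul_right]

lemma P_repr (f : A) (r : Coalgebra.Repr k f (A × A)) :
    LinearMap.mul' k A (TensorProduct.map (φinv ∘ₗ π) LinearMap.id (Coalgebra.comul f))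
      = ∑ i ∈ r.index, φinv (π (r.left i)) * r.right i := by
  rw [← r.eq]
  simp [map_sum]

lemma antipode_π_collapse (hπΔ : Coalgebra.comul ∘ₗ π = TensorProduct.map π π ∘ₗ Coalgebra.comul)
    (hπε : (Coalgebra.counit : B →ₗ[k] k) ∘ₗ π = (Coalgebra.counit : A →ₗ[k] k))
    (x : A) (rx : Coalgebra.Repr k x (A × A)) :
    ∑ j ∈ rx.index, HopfAlgebra.antipode (R := k) (π (rx.left j)) * π (rx.right j)
      = algebraMap k B (Coalgebra.counit (R := k) x) := by
  have h := HopfAlgebra.mul_antipode_rTensor_comul_apply (R := k) (a := π x)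
  have hc : Coalgebra.comul (R := k) (π x) = TensorProduct.map π π (Coalgebra.comul x) :=
    LinearMap.congr_fun hπΔ x
  rw [hc, ← rx.eq] at h
  simp only [map_sum, TensorProduct.map_tmul, LinearMap.rTensor_tmul,
    LinearMap.mul'_apply] at h
  rw [h]
  congr 1
  exact LinearMap.congr_fun hπε x

lemma LP_eq (hπmul : ∀ a b : A, π (a * b) = π a * π b) (hπone : π 1 = 1)
    (hπΔ : Coalgebra.comul ∘ₗ π = TensorProduct.map π π ∘ₗ Coalgebra.comul)
    (hπε : (Coalgebra.counit : B →ₗ[k] k) ∘ₗ π = (Coalgebra.counit : A →ₗ[k] k))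
    (hsec : (LinearMap.rTensor A π ∘ₗ Coalgebra.comul) ∘ₗ φ =
      LinearMap.lTensor B φ ∘ₗ Coalgebra.comul)
    (hφinv₁ : LinearMap.mul' k A ∘ₗ TensorProduct.map φ φinv ∘ₗ Coalgebra.comul =
      Algebra.linearMap k A ∘ₗ (Coalgebra.counit : B →ₗ[k] k))
    (hφinv₂ : LinearMap.mul' k A ∘ₗ TensorProduct.map φinv φ ∘ₗ Coalgebra.comul =
      Algebra.linearMap k A ∘ₗ (Coalgebra.counit : B →ₗ[k] k))
    (f : A) :
    LinearMap.rTensor A π (Coalgebra.comul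
        (LinearMap.mul' k A (TensorProduct.map (φinv ∘ₗ π) LinearMap.id (Coalgebra.comul f))))
      = (1 : B) ⊗ₜ[k]
        LinearMap.mul' k A (TensorProduct.map (φinv ∘ₗ π) LinearMap.id (Coalgebra.comul f)) := by
  classical
  set r := ℛ k f with hr
  have h := sw4 f r (fun i => ℛ k (r.left i)) (fun i => ℛ k (r.right i))
    (fun i m => ℛ k ((ℛ k (r.right i)).left m))
  apply_fun (LinearMap.mul' k (B ⊗[k] A) ∘ₗ
    TensorProduct.map
      (TensorProduct.map (HopfAlgebra.antipode (R := k) ∘ₗ π) (φinv ∘ₗ π) ∘ₗ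
        (TensorProduct.comm k A A).toLinearMap)
      (TensorProduct.map π LinearMap.id) ∘ₗ
    (TensorProduct.assoc k A A (A ⊗[k] A)).symm.toLinearMap) at h
  simp only [map_sum, LinearMap.comp_apply, LinearEquiv.coe_coe,
    TensorProduct.assoc_symm_tmul, TensorProduct.map_tmul, TensorProduct.comm_tmul,
    LinearMap.id_coe, id_eq, LinearMap.mul'_apply,
    Algebra.TensorProduct.tmul_mul_tmul] at h
  calc LinearMap.rTensor A π (Coalgebra.comul
        (LinearMap.mul' k A (TensorProduct.map (φinv ∘ₗ π) LinearMap.id (Coalgebra.comul f))))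
      = ∑ i ∈ r.index,
          LinearMap.rTensor A π (Coalgebra.comul (φinv (π (r.left i)))) *
            LinearMap.rTensor A π (Coalgebra.comul (r.right i)) := by
        rw [P_repr π φinv f r, map_sum, map_sum]
        refine Finset.sum_congr rfl fun i _ => ?_
        rw [LL_mul π hπmul]
    _ = ∑ i ∈ r.index,
          auxH φinv (π (r.left i)) * LinearMap.rTensor A π (Coalgebra.comul (r.right i)) := by
        refine Finset.sum_congr rfl fun i _ => ?_
        rw [key_Lφinv π φ φinv hπmul hπone hsec hφinv₁ hφinv₂]
    _ = ∑ i ∈ r.index, ∑ j ∈ (ℛ k (r.left i)).index, ∑ m ∈ (ℛ k (r.right i)).index,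
          (HopfAlgebra.antipode (R := k) (π ((ℛ k (r.left i)).right j)) *
            π ((ℛ k (r.right i)).left m)) ⊗ₜ[k]
          (φinv (π ((ℛ k (r.left i)).left j)) * (ℛ k (r.right i)).right m) := by
        refine Finset.sum_congr rfl fun i _ => ?_
        rw [auxH_π_repr π φinv hπΔ _ (ℛ k (r.left i)), LL_repr π _ (ℛ k (r.right i)),
          Finset.sum_mul_sum]
        simp [Algebra.TensorProduct.tmul_mul_tmul]
    _ = ∑ i ∈ r.index, ∑ m ∈ (ℛ k (r.right i)).index,
          ∑ j ∈ (ℛ k ((ℛ k (r.right i)).left m)).index,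
          (HopfAlgebra.antipode (R := k) (π ((ℛ k ((ℛ k (r.right i)).left m)).left j)) *
            π ((ℛ k ((ℛ k (r.right i)).left m)).right j)) ⊗ₜ[k]
          (φinv (π (r.left i)) * (ℛ k (r.right i)).right m) := h
    _ = ∑ i ∈ r.index, ∑ m ∈ (ℛ k (r.right i)).index,
          Coalgebra.counit (R := k) ((ℛ k (r.right i)).left m) •
            ((1 : B) ⊗ₜ[k] (φinv (π (r.left i)) * (ℛ k (r.right i)).right m)) := by
        refine Finset.sum_congr rfl fun i _ => Finset.sum_congr rfl fun m _ => ?_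
        rw [← TensorProduct.sum_tmul,
          antipode_π_collapse π hπΔ hπε _ (ℛ k ((ℛ k (r.right i)).left m)),
          Algebra.algebraMap_eq_smul_one, TensorProduct.smul_tmul']
    _ = ∑ i ∈ r.index, (1 : B) ⊗ₜ[k] (φinv (π (r.left i)) * r.right i) := by
        refine Finset.sum_congr rfl fun i _ => ?_
        calc ∑ m ∈ (ℛ k (r.right i)).index,
              Coalgebra.counit (R := k) ((ℛ k (r.right i)).left m) •
                ((1 : B) ⊗ₜ[k] (φinv (π (r.left i)) * (ℛ k (r.right i)).right m))
            = ∑ m ∈ (ℛ k (r.right i)).index,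
              (1 : B) ⊗ₜ[k] (φinv (π (r.left i)) *
                (Coalgebra.counit (R := k) ((ℛ k (r.right i)).left m) •
                  (ℛ k (r.right i)).right m)) := by
              refine Finset.sum_congr rfl fun m _ => ?_
              rw [mul_smul_comm, TensorProduct.tmul_smul]
          _ = (1 : B) ⊗ₜ[k] (φinv (π (r.left i)) *
                (∑ m ∈ (ℛ k (r.right i)).index,
                  Coalgebra.counit (R := k) ((ℛ k (r.right i)).left m) •
                    (ℛ k (r.right i)).right m)) := by
              rw [Finset.mul_sum, TensorProduct.tmul_sum]
          _ = (1 : B) ⊗ₜ[k] (φinv (π (r.left i)) * r.right i) := by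
              rw [counit_smul_right]
    _ = (1 : B) ⊗ₜ[k]
        LinearMap.mul' k A (TensorProduct.map (φinv ∘ₗ π) LinearMap.id (Coalgebra.comul f)) := by
        rw [← TensorProduct.tmul_sum, P_repr π φinv f r]

end hopfaux

set_option maxHeartbeats 1000000 in
/-- If the surjective Hopf algebra morphism `π : A → B` has a left section `φ`,
and `(V, ρR)` is a right `B`-comodule with induced space `H_R ⊆ V ⊗ A`, then
`T_φ : v ↦ Σ v₀ ⊗ φ(v₁)` takes values in `H_R`, and
`I_φ : V ⊗ B_K → H_R, v ⊗ b ↦ Σ v₀ ⊗ φ(v₁)b` is a bijection onto `H_R` with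
inverse `v ⊗ f ↦ Σ v ⊗ φ⁻¹(π(f₁)) f₂`; moreover it is a morphism of right
`B_K`-modules, so `H_R ≅ V ⊗ B_K` as right `B_K`-modules. -/
theorem induced_space_trivialization
    {k A B V : Type*} [Field k] [Ring A] [HopfAlgebra k A]
    [Ring B] [HopfAlgebra k B]
    [AddCommGroup V] [Module k V]
    (π : A →ₗ[k] B) (hsurj : Function.Surjective π)
    (hπone : π 1 = 1) (hπmul : ∀ a b : A, π (a * b) = π a * π b)
    (hπΔ : Coalgebra.comul ∘ₗ π = TensorProduct.map π π ∘ₗ Coalgebra.comul)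
    (hπε : (Coalgebra.counit : B →ₗ[k] k) ∘ₗ π = (Coalgebra.counit : A →ₗ[k] k))
    (φ φinv : B →ₗ[k] A)
    (hφinv₁ : LinearMap.mul' k A ∘ₗ TensorProduct.map φ φinv ∘ₗ Coalgebra.comul =
      Algebra.linearMap k A ∘ₗ (Coalgebra.counit : B →ₗ[k] k))
    (hφinv₂ : LinearMap.mul' k A ∘ₗ TensorProduct.map φinv φ ∘ₗ Coalgebra.comul =
      Algebra.linearMap k A ∘ₗ (Coalgebra.counit : B →ₗ[k] k))
    (hφone : φ 1 = 1)
    (hsec : (LinearMap.rTensor A π ∘ₗ Coalgebra.comul) ∘ₗ φ =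
      LinearMap.lTensor B φ ∘ₗ Coalgebra.comul)
    (ρR : V →ₗ[k] V ⊗[k] B)
    (hρcounit : (TensorProduct.rid k V).toLinearMap ∘ₗ
      LinearMap.lTensor V (Coalgebra.counit : B →ₗ[k] k) ∘ₗ ρR = LinearMap.id)
    (hρcoassoc : LinearMap.lTensor V (Coalgebra.comul : B →ₗ[k] B ⊗[k] B) ∘ₗ ρR =
      (TensorProduct.assoc k V B B).toLinearMap ∘ₗ LinearMap.rTensor B ρR ∘ₗ ρR) :
    let L : A →ₗ[k] B ⊗[k] A := LinearMap.rTensor A π ∘ₗ Coalgebra.comul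
    let BK : Submodule k A := LinearMap.ker (L - TensorProduct.mk k B A 1)
    let HR : Submodule k (V ⊗[k] A) := LinearMap.ker
      (LinearMap.lTensor V L
        - (TensorProduct.assoc k V B A).toLinearMap ∘ₗ LinearMap.rTensor A ρR)
    -- `T_φ : v ↦ Σ v₀ ⊗ φ(v₁)`
    let Tφ : V →ₗ[k] V ⊗[k] A := LinearMap.lTensor V φ ∘ₗ ρR
    -- `v ⊗ a ↦ Σ v₀ ⊗ φ(v₁)a` on `V ⊗ A`
    let J : V ⊗[k] A →ₗ[k] V ⊗[k] A :=
      LinearMap.lTensor V (LinearMap.mul' k A ∘ₗ LinearMap.rTensor A φ) ∘ₗ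
        (TensorProduct.assoc k V B A).toLinearMap ∘ₗ LinearMap.rTensor A ρR
    -- `I_φ : V ⊗ B_K → V ⊗ A, v ⊗ b ↦ Σ v₀ ⊗ φ(v₁)b`
    let Iφ : V ⊗[k] BK →ₗ[k] V ⊗[k] A := J ∘ₗ LinearMap.lTensor V BK.subtype
    -- the inverse formula `v ⊗ f ↦ Σ v ⊗ φ⁻¹(π(f₁)) f₂`
    let P : A →ₗ[k] A := LinearMap.mul' k A ∘ₗ
      TensorProduct.map (φinv ∘ₗ π) LinearMap.id ∘ₗ Coalgebra.comul
    (∀ v : V, Tφ v ∈ HR) ∧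
    (∀ x : V ⊗[k] BK, Iφ x ∈ HR) ∧
    (∀ x : V ⊗[k] BK, LinearMap.lTensor V P (Iφ x) = LinearMap.lTensor V BK.subtype x) ∧
    (∀ F ∈ HR, LinearMap.lTensor V P F ∈
      LinearMap.range (LinearMap.lTensor V BK.subtype)) ∧
    (∀ F ∈ HR, J (LinearMap.lTensor V P F) = F) ∧
    -- `I_φ` is a right `B_K`-module map
    (∀ (b : A) (hb : b ∈ BK) (hres : ∀ y ∈ BK, LinearMap.mulRight k b y ∈ BK)
      (x : V ⊗[k] BK),
      LinearMap.lTensor V (LinearMap.mulRight k b) (Iφ x) =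
        Iφ (LinearMap.lTensor V ((LinearMap.mulRight k b).restrict hres) x)) := by
  intro L BK HR Tφ J Iφ P
  classical
  -- basic translations
  have hL : ∀ a : A, L a = LinearMap.rTensor A π (Coalgebra.comul a) := fun _ => rfl
  have hLmul : ∀ x y : A, L (x * y) = L x * L y := fun x y => LL_mul π hπmul x y
  have hBK_L : ∀ b ∈ BK, L b = (1 : B) ⊗ₜ[k] b := by
    intro b hb
    have h : (L - TensorProduct.mk k B A 1) b = 0 := hb
    rw [LinearMap.sub_apply, sub_eq_zero] at h
    exact h
  have hBK_mem : ∀ a : A, L a = (1 : B) ⊗ₜ[k] a → a ∈ BK := by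
    intro a ha
    show (L - TensorProduct.mk k B A 1) a = 0
    rw [LinearMap.sub_apply, sub_eq_zero]
    exact ha
  have hHR_mem : ∀ F : V ⊗[k] A, F ∈ HR ↔ LinearMap.lTensor V L F =
      (TensorProduct.assoc k V B A) (LinearMap.rTensor A ρR F) := by
    intro F
    constructor
    · intro hF
      have h : (LinearMap.lTensor V L
          - (TensorProduct.assoc k V B A).toLinearMap ∘ₗ LinearMap.rTensor A ρR) F = 0 := hF
      rw [LinearMap.sub_apply, sub_eq_zero] at h
      exact h
    · intro h
      show (LinearMap.lTensor V L
          - (TensorProduct.assoc k V B A).toLinearMap ∘ₗ LinearMap.rTensor A ρR) F = 0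
      rw [LinearMap.sub_apply, sub_eq_zero]
      exact h
  -- the generic membership lemma
  have hMem : ∀ ψ : B →ₗ[k] A, (L ∘ₗ ψ = LinearMap.lTensor B ψ ∘ₗ Coalgebra.comul) →
      ∀ v : V, LinearMap.lTensor V ψ (ρR v) ∈ HR := by
    intro ψ hψ v
    rw [hHR_mem]
    have nat1 : (TensorProduct.assoc k V B A).toLinearMap ∘ₗ
        LinearMap.lTensor (V ⊗[k] B) ψ
        = LinearMap.lTensor V (LinearMap.lTensor B ψ) ∘ₗ
          (TensorProduct.assoc k V B B).toLinearMap := by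
      apply TensorProduct.ext_threefold
      intro x y z
      simp
    have h1 : LinearMap.lTensor V L (LinearMap.lTensor V ψ (ρR v))
        = LinearMap.lTensor V (LinearMap.lTensor B ψ)
            ((TensorProduct.assoc k V B B) (LinearMap.rTensor B ρR (ρR v))) := by
      rw [← LinearMap.comp_apply, ← LinearMap.lTensor_comp, hψ, LinearMap.lTensor_comp,
        LinearMap.comp_apply]
      congr 1
      have h := LinearMap.congr_fun hρcoassoc v
      simpa using h
    have h2 : (TensorProduct.assoc k V B A)
          (LinearMap.rTensor A ρR (LinearMap.lTensor V ψ (ρR v)))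
        = LinearMap.lTensor V (LinearMap.lTensor B ψ)
            ((TensorProduct.assoc k V B B) (LinearMap.rTensor B ρR (ρR v))) := by
      have e : LinearMap.rTensor A ρR ∘ₗ LinearMap.lTensor V ψ
          = LinearMap.lTensor (V ⊗[k] B) ψ ∘ₗ LinearMap.rTensor B ρR := by
        rw [LinearMap.rTensor_comp_lTensor, LinearMap.lTensor_comp_rTensor]
      rw [← LinearMap.comp_apply, e, LinearMap.comp_apply]
      have h := LinearMap.congr_fun nat1 (LinearMap.rTensor B ρR (ρR v))
      simpa using h
    rw [h1, h2]
  -- `J` on pure tensors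
  have hJtmul : ∀ (v : V) (a : A),
      J (v ⊗ₜ[k] a) = LinearMap.lTensor V (LinearMap.mulRight k a ∘ₗ φ) (ρR v) := by
    intro v a
    show LinearMap.lTensor V (LinearMap.mul' k A ∘ₗ LinearMap.rTensor A φ)
        ((TensorProduct.assoc k V B A) (LinearMap.rTensor A ρR (v ⊗ₜ[k] a))) = _
    rw [LinearMap.rTensor_tmul]
    induction ρR v using TensorProduct.induction_on with
    | zero => simp
    | tmul x b => simp
    | add u w hu hw =>
      rw [add_tmul, map_add, map_add, map_add, hu, hw]
  -- the key section property for `ψ_b = (· * b) ∘ φ`, `b ∈ BK`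
  have hLφb : ∀ (c : B) (b : A), b ∈ BK →
      L (φ c * b) = ∑ i ∈ (ℛ k c).index,
        (ℛ k c).left i ⊗ₜ[k] (φ ((ℛ k c).right i) * b) := by
    intro c b hb
    rw [hLmul, hBK_L b hb, hL, Lφ_repr π φ hsec c (ℛ k c), Finset.sum_mul]
    refine Finset.sum_congr rfl fun i _ => ?_
    rw [Algebra.TensorProduct.tmul_mul_tmul, mul_one]
  have hψb : ∀ b : A, b ∈ BK →
      L ∘ₗ (LinearMap.mulRight k b ∘ₗ φ) =
        LinearMap.lTensor B (LinearMap.mulRight k b ∘ₗ φ) ∘ₗ Coalgebra.comul := by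
    intro b hb
    apply LinearMap.ext
    intro c
    simp only [LinearMap.comp_apply, LinearMap.mulRight_apply]
    rw [hLφb c b hb, ← (ℛ k c).eq, map_sum]
    simp [LinearMap.mulRight_apply]
  -- Part 1
  have part1 : ∀ v : V, Tφ v ∈ HR := by
    intro v
    exact hMem φ hsec v
  -- Part 2
  have part2 : ∀ x : V ⊗[k] BK, Iφ x ∈ HR := by
    intro x
    induction x using TensorProduct.induction_on with
    | zero => simpa using Submodule.zero_mem HR
    | tmul v b =>
      have : Iφ (v ⊗ₜ[k] b) = J (v ⊗ₜ[k] (b : A)) := rfl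
      rw [this, hJtmul]
      exact hMem _ (hψb (b : A) b.2) v
    | add x y hx hy =>
      rw [map_add]
      exact Submodule.add_mem HR hx hy
  -- `P` in terms of `L`
  have hPL : P = (LinearMap.mul' k A ∘ₗ TensorProduct.map φinv LinearMap.id) ∘ₗ L := by
    show LinearMap.mul' k A ∘ₗ TensorProduct.map (φinv ∘ₗ π) LinearMap.id ∘ₗ Coalgebra.comul = _
    have e : TensorProduct.map (φinv ∘ₗ π) (LinearMap.id : A →ₗ[k] A)
        = TensorProduct.map φinv LinearMap.id ∘ₗ LinearMap.rTensor A π := by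
      rw [LinearMap.rTensor]
      rw [← TensorProduct.map_comp]
      congr 1
    rw [e]
    rfl
  -- `P (φ c * b) = ε(c) • b` for `b ∈ BK`
  have hPφb : ∀ (c : B) (b : A), b ∈ BK → P (φ c * b) = Coalgebra.counit (R := k) c • b := by
    intro c b hb
    have : P (φ c * b) = LinearMap.mul' k A
        (TensorProduct.map φinv LinearMap.id (L (φ c * b))) := by
      rw [hPL]; rfl
    rw [this, hLφb c b hb, map_sum, map_sum]
    simp only [TensorProduct.map_tmul, LinearMap.id_coe, id_eq, LinearMap.mul'_apply]
    calc ∑ i ∈ (ℛ k c).index, φinv ((ℛ k c).left i) * (φ ((ℛ k c).right i) * b)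
        = (∑ i ∈ (ℛ k c).index, φinv ((ℛ k c).left i) * φ ((ℛ k c).right i)) * b := by
          rw [Finset.sum_mul]
          refine Finset.sum_congr rfl fun i _ => ?_
          rw [mul_assoc]
      _ = Coalgebra.counit (R := k) c • b := by
          rw [conv_repr φinv φ hφinv₂ c (ℛ k c), ← Algebra.smul_def]
  -- counit of the comodule, elementwise
  have hρcount : ∀ (v : V) (s : Finset (V × B)), ρR v = ∑ p ∈ s, p.1 ⊗ₜ[k] p.2 →
      ∑ p ∈ s, Coalgebra.counit (R := k) p.2 • p.1 = v := by
    intro v s hs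
    have h := LinearMap.congr_fun hρcounit v
    simp only [LinearMap.comp_apply, LinearMap.id_apply, LinearEquiv.coe_coe] at h
    rw [hs] at h
    simpa [map_sum] using h
  -- Part 3
  have part3 : ∀ x : V ⊗[k] BK,
      LinearMap.lTensor V P (Iφ x) = LinearMap.lTensor V BK.subtype x := by
    intro x
    induction x using TensorProduct.induction_on with
    | zero => simp
    | tmul v b =>
      have h0 : Iφ (v ⊗ₜ[k] b) = J (v ⊗ₜ[k] (b : A)) := rfl
      rw [h0, hJtmul]
      obtain ⟨s, hs⟩ := TensorProduct.exists_finset (ρR v)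
      rw [hs]
      simp only [map_sum, LinearMap.lTensor_tmul, LinearMap.comp_apply,
        LinearMap.mulRight_apply]
      have : ∀ p ∈ s, p.1 ⊗ₜ[k] (P (φ p.2 * (b : A)))
          = Coalgebra.counit (R := k) p.2 • (p.1 ⊗ₜ[k] (b : A)) := by
        intro p _
        rw [hPφb p.2 (b : A) b.2, TensorProduct.tmul_smul]
      have e2 : ∀ p ∈ s, Coalgebra.counit (R := k) p.2 • (p.1 ⊗ₜ[k] (b : A))
          = (Coalgebra.counit (R := k) p.2 • p.1) ⊗ₜ[k] (b : A) := fun p _ => by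
        rw [TensorProduct.smul_tmul']
      rw [Finset.sum_congr rfl this, Finset.sum_congr rfl e2, ← TensorProduct.sum_tmul,
        hρcount v s hs]
      rfl
    | add x y hx hy =>
      rw [map_add, map_add, map_add, hx, hy]
  -- Part 4
  have hPmem : ∀ f : A, P f ∈ BK := fun f =>
    hBK_mem (P f) (LP_eq π φ φinv hπmul hπone hπΔ hπε hsec hφinv₁ hφinv₂ f)
  have part4 : ∀ F ∈ HR, LinearMap.lTensor V P F ∈
      LinearMap.range (LinearMap.lTensor V BK.subtype) := by
    intro F _
    refine ⟨LinearMap.lTensor V (LinearMap.codRestrict BK P hPmem) F, ?_⟩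
    rw [← LinearMap.comp_apply, ← LinearMap.lTensor_comp,
      LinearMap.subtype_comp_codRestrict]
  -- Part 5
  have hθ : ∀ (g : A) (c : B) (u : V ⊗[k] B),
      LinearMap.lTensor V (LinearMap.mulRight k g ∘ₗ LinearMap.mul' k A ∘ₗ
        TensorProduct.map φ φinv) ((TensorProduct.assoc k V B B) (u ⊗ₜ[k] c))
      = LinearMap.lTensor V (LinearMap.mulRight k (φinv c * g) ∘ₗ φ) u := by
    intro g c u
    induction u using TensorProduct.induction_on with
    | zero => simp
    | tmul x d =>
      rw [TensorProduct.assoc_tmul, LinearMap.lTensor_tmul, LinearMap.lTensor_tmul]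
      simp only [LinearMap.comp_apply, TensorProduct.map_tmul, LinearMap.mul'_apply,
        LinearMap.mulRight_apply]
      rw [mul_assoc]
    | add u w hu hw => rw [add_tmul, map_add, map_add, map_add, hu, hw]
  have hFive : J ∘ₗ
      (LinearMap.lTensor V (LinearMap.mul' k A ∘ₗ TensorProduct.map φinv LinearMap.id)) ∘ₗ
      (TensorProduct.assoc k V B A).toLinearMap ∘ₗ LinearMap.rTensor A ρR
      = LinearMap.id := by
    apply TensorProduct.ext'
    intro w g
    simp only [LinearMap.comp_apply, LinearEquiv.coe_coe, LinearMap.rTensor_tmul,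
      LinearMap.id_apply]
    obtain ⟨s, hs⟩ := TensorProduct.exists_finset (ρR w)
    have hco := LinearMap.congr_fun hρcoassoc w
    simp only [LinearMap.comp_apply, LinearEquiv.coe_coe] at hco
    set Θ : V ⊗[k] (B ⊗[k] B) →ₗ[k] V ⊗[k] A :=
      LinearMap.lTensor V (LinearMap.mulRight k g ∘ₗ LinearMap.mul' k A ∘ₗ
        TensorProduct.map φ φinv) with hΘ
    have hcoΘ := congrArg Θ hco
    calc J ((LinearMap.lTensor V (LinearMap.mul' k A ∘ₗ TensorProduct.map φinv LinearMap.id))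
          ((TensorProduct.assoc k V B A) (ρR w ⊗ₜ[k] g)))
        = ∑ p ∈ s, J (p.1 ⊗ₜ[k] (φinv p.2 * g)) := by
          rw [hs, TensorProduct.sum_tmul, map_sum, map_sum, map_sum]
          refine Finset.sum_congr rfl fun p _ => ?_
          simp
      _ = ∑ p ∈ s, LinearMap.lTensor V (LinearMap.mulRight k (φinv p.2 * g) ∘ₗ φ) (ρR p.1) :=
          Finset.sum_congr rfl fun p _ => hJtmul p.1 _
      _ = ∑ p ∈ s, Θ ((TensorProduct.assoc k V B B) (ρR p.1 ⊗ₜ[k] p.2)) :=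
          Finset.sum_congr rfl fun p _ => (hθ g p.2 (ρR p.1)).symm
      _ = Θ ((TensorProduct.assoc k V B B) (LinearMap.rTensor B ρR (ρR w))) := by
          conv_rhs => rw [hs]
          rw [map_sum, map_sum, map_sum]
          refine Finset.sum_congr rfl fun p _ => ?_
          rw [LinearMap.rTensor_tmul]
      _ = Θ (LinearMap.lTensor V Coalgebra.comul (ρR w)) := hcoΘ.symm
      _ = w ⊗ₜ[k] g := by
          rw [hs, map_sum, map_sum]
          have e : ∀ p ∈ s, Θ (LinearMap.lTensor V Coalgebra.comul (p.1 ⊗ₜ[k] p.2))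
              = Coalgebra.counit (R := k) p.2 • (p.1 ⊗ₜ[k] g) := by
            intro p _
            rw [LinearMap.lTensor_tmul, hΘ, LinearMap.lTensor_tmul]
            have h1 := LinearMap.congr_fun hφinv₁ p.2
            simp only [LinearMap.comp_apply, Algebra.linearMap_apply] at h1
            simp only [LinearMap.comp_apply, LinearMap.mulRight_apply]
            rw [h1, ← Algebra.smul_def, TensorProduct.tmul_smul]
          have e2 : ∀ p ∈ s, Coalgebra.counit (R := k) p.2 • (p.1 ⊗ₜ[k] g)
              = (Coalgebra.counit (R := k) p.2 • p.1) ⊗ₜ[k] g := fun p _ => by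
            rw [TensorProduct.smul_tmul']
          rw [Finset.sum_congr rfl e, Finset.sum_congr rfl e2, ← TensorProduct.sum_tmul,
            hρcount w s hs]
  have part5 : ∀ F ∈ HR, J (LinearMap.lTensor V P F) = F := by
    intro F hF
    have h1 : LinearMap.lTensor V P F
        = (LinearMap.lTensor V (LinearMap.mul' k A ∘ₗ TensorProduct.map φinv LinearMap.id))
            ((TensorProduct.assoc k V B A) (LinearMap.rTensor A ρR F)) := by
      rw [hPL, LinearMap.lTensor_comp, LinearMap.comp_apply, (hHR_mem F).1 hF]
    rw [h1]
    have h2 := LinearMap.congr_fun hFive F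
    simpa only [LinearMap.comp_apply, LinearEquiv.coe_coe, LinearMap.id_apply] using h2
  -- Part 6
  have part6 : ∀ (b : A) (_ : b ∈ BK) (hres : ∀ y ∈ BK, LinearMap.mulRight k b y ∈ BK)
      (x : V ⊗[k] BK),
      LinearMap.lTensor V (LinearMap.mulRight k b) (Iφ x) =
        Iφ (LinearMap.lTensor V ((LinearMap.mulRight k b).restrict hres) x) := by
    intro b hb hres x
    induction x using TensorProduct.induction_on with
    | zero => simp
    | tmul v y =>
      have h0 : Iφ (v ⊗ₜ[k] y) = J (v ⊗ₜ[k] (y : A)) := rfl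
      have h1 : Iφ (LinearMap.lTensor V ((LinearMap.mulRight k b).restrict hres) (v ⊗ₜ[k] y))
          = J (v ⊗ₜ[k] ((y : A) * b)) := rfl
      have e : LinearMap.mulRight k b ∘ₗ (LinearMap.mulRight k (y : A) ∘ₗ φ)
          = LinearMap.mulRight k ((y : A) * b) ∘ₗ φ := by
        apply LinearMap.ext; intro c; simp [mul_assoc]
      rw [h0, h1, hJtmul, hJtmul, ← LinearMap.comp_apply, ← LinearMap.lTensor_comp, e]
    | add x y hx hy =>
      simp only [map_add, hx, hy]
  exact ⟨part1, part2, part3, part4, part5, part6⟩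
end
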